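/- arXiv:1809.11158 — 7 statements merged into one kernel-verified Lean document; each statement's English description precedes it below -/
import Mathlib

section
/- For any code C ⊆ F_{q^m}^N (linear or nonlinear) with sum-rank length partition N = r_1 + ... + r_g, the minimum sum-rank distance of C equals the minimum, over all block-diagonal matrices A = diag(A_1,...,A_g) with each A_i an invertible r_i × r_i matrix over F_q, of the minimum Hamming distance of the code C·A. -/
/-- Sum-rank weight of a block vector over `Fq`: sum over the blocks of the
`Fq`-rank of the block (i.e. the `Fq`-dimension of the span of its entries). -/
noncomputable def srWeight (Fq : Type*) [Field Fq] {F : Type*} [Field F] [Algebra Fq F]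
    {g : ℕ} {r : Fin g → ℕ} (c : ∀ i : Fin g, Fin (r i) → F) : ℕ :=
  ∑ i, Module.finrank Fq (Submodule.span Fq (Set.range (c i)))

/-- Minimum sum-rank distance of a (possibly nonlinear) code. -/
noncomputable def srMinDist (Fq : Type*) [Field Fq] {F : Type*} [Field F] [Algebra Fq F]
    {g : ℕ} {r : Fin g → ℕ} (C : Set (∀ i : Fin g, Fin (r i) → F)) : ℕ :=
  sInf {w | ∃ c ∈ C, ∃ d ∈ C, c ≠ d ∧ w = srWeight Fq (c - d)}

/-- Hamming weight of a block vector. -/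
noncomputable def hamWeight {F : Type*} [Field F] [DecidableEq F]
    {g : ℕ} {r : Fin g → ℕ} (c : ∀ i : Fin g, Fin (r i) → F) : ℕ :=
  ∑ i, (Finset.univ.filter fun j => c i j ≠ 0).card

/-- Minimum Hamming distance of a (possibly nonlinear) code. -/
noncomputable def hamMinDist {F : Type*} [Field F] [DecidableEq F]
    {g : ℕ} {r : Fin g → ℕ} (C : Set (∀ i : Fin g, Fin (r i) → F)) : ℕ :=
  sInf {w | ∃ c ∈ C, ∃ d ∈ C, c ≠ d ∧ w = hamWeight (c - d)}

/-- Blockwise multiplication of a block vector by a block-diagonal matrix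
`diag(A_1, …, A_g)` with entries in the subfield `Fq`. -/
noncomputable def blockMul {Fq F : Type*} [Field Fq] [Field F] [Algebra Fq F]
    {g : ℕ} {r n : Fin g → ℕ} (c : ∀ i : Fin g, Fin (r i) → F)
    (A : ∀ i : Fin g, Matrix (Fin (r i)) (Fin (n i)) Fq) :
    ∀ i : Fin g, Fin (n i) → F :=
  fun i j => ∑ t, c i t * algebraMap Fq F (A i t j)

/-!
Multiplying a block by an invertible matrix over `F_q` does not change the `F_q`-span of its
entries, so sum-rank weights are invariant under `c ↦ c·A`; and the Hamming weight of a block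
bounds its rank, since its nonzero entries span the same space as all of them. Conversely, if
the entries of a block `v ∈ F_{q^m}^n` span a space of dimension `k`, the kernel of
`x ↦ ∑ₜ xₜ vₜ` on `F_qⁿ` has dimension `n - k`; taking as columns of `A` a basis of `F_qⁿ` that
extends a basis of this kernel leaves at most `k` nonzero entries in `v·A`. Doing this blockwise
for a pair of codewords at minimum sum-rank distance yields a matrix attaining the minimum.
-/

open Module Submodule Matrix Finset

theorem Module.Basis.sumExtend_apply_inl {K V ι : Type*} [DivisionRing K] [AddCommGroup V]
    [Module K V] {v : ι → V} (hv : LinearIndependent K v) (i : ι) :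
    Basis.sumExtend hv (Sum.inl i) = v i := by
  simp only [Basis.sumExtend, Basis.coe_reindex, Function.comp_apply, Basis.coe_extend]
  rfl

theorem LinearMap.exists_basis_card_apply_ne_zero_le_finrank_range {K V M ι : Type*} [Field K]
    [AddCommGroup V] [Module K V] [AddCommGroup M] [Module K M] [DecidableEq M] [Fintype ι]
    (b₀ : Basis ι K V) (φ : V →ₗ[K] M) :
    ∃ b : Basis ι K V, #{i | φ (b i) ≠ 0} ≤ finrank K (LinearMap.range φ) := by
  classical
  have := Module.Finite.of_basis b₀
  let bK := finBasis K (LinearMap.ker φ)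
  have hK : LinearIndependent K fun k => (bK k : V) :=
    bK.linearIndependent.map' _ (LinearMap.ker φ).ker_subtype
  let b := Basis.sumExtend hK
  let e := b.indexEquiv b₀
  refine ⟨b.reindex e, ?_⟩
  have hsub : ({i | φ (b.reindex e i) ≠ 0} : Finset ι) ⊆
      univ \ univ.map (Function.Embedding.inl.trans e.toEmbedding) := by
    intro i hi
    refine mem_sdiff.2 ⟨mem_univ i, fun hmem => (mem_filter.1 hi).2 ?_⟩
    obtain ⟨k, -, rfl⟩ := mem_map.1 hmem
    simp [b, Basis.sumExtend_apply_inl]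
  calc #{i | φ (b.reindex e i) ≠ 0}
      ≤ #(univ \ univ.map (Function.Embedding.inl.trans e.toEmbedding)) := card_le_card hsub
    _ = finrank K V - finrank K (LinearMap.ker φ) := by
      rw [card_univ_sdiff, card_map, card_univ, Fintype.card_fin, finrank_eq_card_basis b₀]
    _ = finrank K (LinearMap.range φ) := by
      rw [← LinearMap.finrank_range_add_finrank_ker φ, Nat.add_sub_cancel]

theorem finrank_span_range_le_card_ne_zero {K M ι : Type*} [DivisionRing K] [AddCommGroup M]
    [Module K M] [DecidableEq M] [Fintype ι] (v : ι → M) :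
    finrank K (span K (Set.range v)) ≤ #{i | v i ≠ 0} := by
  have hspan : span K (Set.range v) = span K (Set.range fun i : {i // v i ≠ 0} => v i) := by
    refine le_antisymm (span_le.2 ?_) (span_mono (Set.range_comp_subset_range _ v))
    rintro _ ⟨i, rfl⟩
    by_cases hi : v i = 0
    · simp [hi]
    · exact subset_span ⟨⟨i, hi⟩, rfl⟩
  rw [hspan, ← Fintype.card_subtype]
  exact finrank_range_le_card _

section VecMul

variable {Fq F ι κ : Type*} [Field Fq] [Field F] [Algebra Fq F] [Fintype ι]

theorem vecMul_map_algebraMap (v : ι → F) (A : Matrix ι κ Fq) :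
    vecMul v (A.map (algebraMap Fq F)) = Fintype.linearCombination Fq v ∘ A.col := by
  funext j
  simp [vecMul, dotProduct, Fintype.linearCombination_apply, Algebra.smul_def, mul_comm]

theorem span_range_vecMul_map_algebraMap [DecidableEq ι] (v : ι → F) {A : Matrix ι ι Fq}
    (hA : IsUnit A) :
    span Fq (Set.range (vecMul v (A.map (algebraMap Fq F)))) = span Fq (Set.range v) := by
  have hcols : span Fq (Set.range A.col) = ⊤ := by
    rw [← range_mulVecLin, LinearMap.range_eq_top]
    exact mulVec_surjective_iff_isUnit.2 hA
  rw [vecMul_map_algebraMap, Set.range_comp, span_image, hcols, Submodule.map_top,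
    Fintype.range_linearCombination]

theorem exists_isUnit_card_vecMul_map_algebraMap_ne_zero_le [DecidableEq ι] [DecidableEq F]
    (v : ι → F) :
    ∃ A : Matrix ι ι Fq, IsUnit A ∧
      #{j | vecMul v (A.map (algebraMap Fq F)) j ≠ 0} ≤ finrank Fq (span Fq (Set.range v)) := by
  obtain ⟨b, hb⟩ :=
    (Fintype.linearCombination Fq v).exists_basis_card_apply_ne_zero_le_finrank_range
      (Pi.basisFun Fq ι)
  refine ⟨(of b)ᵀ, linearIndependent_cols_iff_isUnit.1 b.linearIndependent, ?_⟩
  rw [vecMul_map_algebraMap, of_col, ← Fintype.range_linearCombination]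
  exact hb

end VecMul

section BlockMul

variable {Fq F : Type*} [Field Fq] [Field F] [Algebra Fq F] {g : ℕ} {r : Fin g → ℕ}

theorem blockMul_apply_eq_vecMul {n : Fin g → ℕ} (c : ∀ i, Fin (r i) → F)
    (A : ∀ i, Matrix (Fin (r i)) (Fin (n i)) Fq) (i : Fin g) :
    blockMul c A i = vecMul (c i) ((A i).map (algebraMap Fq F)) := by
  funext j
  simp [blockMul, vecMul, dotProduct]

theorem blockMul_sub {n : Fin g → ℕ} (c d : ∀ i, Fin (r i) → F)
    (A : ∀ i, Matrix (Fin (r i)) (Fin (n i)) Fq) :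
    blockMul (c - d) A = blockMul c A - blockMul d A := by
  funext i j
  simp [blockMul, sub_mul, sum_sub_distrib]

theorem blockMul_injective {A : ∀ i, Matrix (Fin (r i)) (Fin (r i)) Fq}
    (hA : ∀ i, IsUnit (A i)) :
    Function.Injective fun c : ∀ i, Fin (r i) → F => blockMul c A := by
  intro c d hcd
  funext i
  have hi := congrFun hcd i
  simp only [blockMul_apply_eq_vecMul] at hi
  exact vecMul_injective_of_isUnit ((hA i).map (algebraMap Fq F).mapMatrix) hi

theorem srWeight_blockMul {A : ∀ i, Matrix (Fin (r i)) (Fin (r i)) Fq} (hA : ∀ i, IsUnit (A i))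
    (c : ∀ i, Fin (r i) → F) : srWeight Fq (blockMul c A) = srWeight Fq c := by
  refine sum_congr rfl fun i _ => ?_
  rw [blockMul_apply_eq_vecMul, span_range_vecMul_map_algebraMap _ (hA i)]

variable [DecidableEq F]

theorem srWeight_le_hamWeight (c : ∀ i, Fin (r i) → F) : srWeight Fq c ≤ hamWeight c :=
  sum_le_sum fun i _ => finrank_span_range_le_card_ne_zero (c i)

theorem exists_isUnit_hamWeight_blockMul_le_srWeight (c : ∀ i, Fin (r i) → F) :
    ∃ A : ∀ i, Matrix (Fin (r i)) (Fin (r i)) Fq,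
      (∀ i, IsUnit (A i)) ∧ hamWeight (blockMul c A) ≤ srWeight Fq c := by
  choose A hA hle using fun i =>
    exists_isUnit_card_vecMul_map_algebraMap_ne_zero_le (Fq := Fq) (c i)
  refine ⟨A, hA, sum_le_sum fun i _ => ?_⟩
  rw [blockMul_apply_eq_vecMul]
  exact hle i

end BlockMul

section MinDist

variable {Fq F : Type*} [Field Fq] [Field F] [Algebra Fq F] {g : ℕ} {r : Fin g → ℕ}
  {C : Set (∀ i : Fin g, Fin (r i) → F)}

theorem srMinDist_le {c d : ∀ i, Fin (r i) → F} (hc : c ∈ C) (hd : d ∈ C) (hcd : c ≠ d) :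
    srMinDist Fq C ≤ srWeight Fq (c - d) :=
  Nat.sInf_le ⟨c, hc, d, hd, hcd, rfl⟩

theorem exists_srMinDist_eq (hC : C.Nontrivial) :
    ∃ c ∈ C, ∃ d ∈ C, c ≠ d ∧ srMinDist Fq C = srWeight Fq (c - d) := by
  obtain ⟨c, hc, d, hd, hcd⟩ := hC
  exact Nat.sInf_mem (s := {w | ∃ c ∈ C, ∃ d ∈ C, c ≠ d ∧ w = srWeight Fq (c - d)})
    ⟨_, c, hc, d, hd, hcd, rfl⟩

variable [DecidableEq F]

theorem hamMinDist_le {c d : ∀ i, Fin (r i) → F} (hc : c ∈ C) (hd : d ∈ C) (hcd : c ≠ d) :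
    hamMinDist C ≤ hamWeight (c - d) :=
  Nat.sInf_le ⟨c, hc, d, hd, hcd, rfl⟩

theorem exists_hamMinDist_eq (hC : C.Nontrivial) :
    ∃ c ∈ C, ∃ d ∈ C, c ≠ d ∧ hamMinDist C = hamWeight (c - d) := by
  obtain ⟨c, hc, d, hd, hcd⟩ := hC
  exact Nat.sInf_mem (s := {w | ∃ c ∈ C, ∃ d ∈ C, c ≠ d ∧ w = hamWeight (c - d)})
    ⟨_, c, hc, d, hd, hcd, rfl⟩

theorem srMinDist_le_hamMinDist_image_blockMul (hC : C.Nontrivial)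
    {A : ∀ i, Matrix (Fin (r i)) (Fin (r i)) Fq} (hA : ∀ i, IsUnit (A i)) :
    srMinDist Fq C ≤ hamMinDist ((blockMul · A) '' C) := by
  obtain ⟨_, ⟨c, hc, rfl⟩, _, ⟨d, hd, rfl⟩, hne, heq⟩ :=
    exists_hamMinDist_eq (hC.image (blockMul_injective hA))
  rw [heq, ← blockMul_sub]
  calc srMinDist Fq C ≤ srWeight Fq (c - d) := srMinDist_le hc hd fun h => hne (h ▸ rfl)
    _ = srWeight Fq (blockMul (c - d) A) := (srWeight_blockMul hA _).symm
    _ ≤ hamWeight (blockMul (c - d) A) := srWeight_le_hamWeight _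

theorem exists_isUnit_hamMinDist_image_blockMul_le_srMinDist (hC : C.Nontrivial) :
    ∃ A : ∀ i, Matrix (Fin (r i)) (Fin (r i)) Fq,
      (∀ i, IsUnit (A i)) ∧ hamMinDist ((blockMul · A) '' C) ≤ srMinDist Fq C := by
  obtain ⟨c, hc, d, hd, hcd, heq⟩ := exists_srMinDist_eq (Fq := Fq) hC
  obtain ⟨A, hA, hle⟩ := exists_isUnit_hamWeight_blockMul_le_srWeight (Fq := Fq) (c - d)
  refine ⟨A, hA, ?_⟩
  calc hamMinDist ((blockMul · A) '' C)
      ≤ hamWeight (blockMul c A - blockMul d A) :=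
        hamMinDist_le (Set.mem_image_of_mem _ hc) (Set.mem_image_of_mem _ hd)
          ((blockMul_injective hA).ne hcd)
    _ ≤ srMinDist Fq C := by rwa [← blockMul_sub, heq]

end MinDist

theorem sum_rank_distance_eq_min_hamming_distances_general
    {Fq F : Type*} [Field Fq] [Field F] [Algebra Fq F]
    [DecidableEq F] {g : ℕ} {r : Fin g → ℕ}
    (C : Set (∀ i : Fin g, Fin (r i) → F)) (hC : C.Nontrivial) :
    srMinDist Fq C =
      sInf {w | ∃ A : ∀ i : Fin g, Matrix (Fin (r i)) (Fin (r i)) Fq,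
        (∀ i, IsUnit (A i)) ∧ w = hamMinDist ((fun c => blockMul c A) '' C)} := by
  obtain ⟨A, hA, hle⟩ := exists_isUnit_hamMinDist_image_blockMul_le_srMinDist (Fq := Fq) hC
  apply le_antisymm
  · refine le_csInf ⟨_, A, hA, rfl⟩ ?_
    rintro _ ⟨B, hB, rfl⟩
    exact srMinDist_le_hamMinDist_image_blockMul hC hB
  · exact le_trans (Nat.sInf_le ⟨A, hA, rfl⟩) hle

/-- the minimum sum-rank distance of a code `C ⊆ F_{q^m}^N` equals the
minimum, over all invertible block-diagonal matrices over `F_q`, of the minimum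
Hamming distance of `C·A`. -/
theorem sum_rank_distance_eq_min_hamming_distances
    {Fq F : Type*} [Field Fq] [Fintype Fq] [Field F] [Fintype F] [Algebra Fq F]
    [DecidableEq F] {g : ℕ} {r : Fin g → ℕ}
    (C : Set (∀ i : Fin g, Fin (r i) → F)) (hC : C.Nontrivial) :
    srMinDist Fq C =
      sInf {w | ∃ A : ∀ i : Fin g, Matrix (Fin (r i)) (Fin (r i)) Fq,
        (∀ i, IsUnit (A i)) ∧ w = hamMinDist ((fun c => blockMul c A) '' C)} :=
  sum_rank_distance_eq_min_hamming_distances_general C hC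
end

section
/- If r_1 = r_2 = ... = r_g = N/g, then any code C ⊆ F_{q^m}^N with |C| ≥ 2 satisfies |C| ≤ (q^{N/g})^{gm − d_SR(C) + 1}. Consequently, if d_SR(C) > 1 and C is MSRD (i.e., |C| = q^{m(N − d_SR(C) + 1)}), then m ≥ N/g. -/
/-!
Fix an `Fq`-basis of `F` with `m` elements and transpose every block: the `k`-th coordinates of the
`r₀` entries of block `i` form the symbol at position `(i, k)` of a word of length `g m` over the
alphabet `Fq ^ r₀`. This is injective, and the rank of a block is at most the number of nonzero rows
of its coordinate matrix, so Hamming distances after transposition dominate sum-rank distances.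
The classical Singleton bound for the transposed code gives `|C| ≤ (q ^ r₀) ^ (g m - d + 1)`.
If moreover `|C| = q ^ (m (g r₀ - d + 1))`, comparing exponents gives `(r₀ - m) (d - 1) ≤ 0`.
-/

open Module Submodule Finset

theorem finrank_span_range_le_hammingNorm_toMatrix {K V ι κ : Type*} [Field K] [AddCommGroup V]
    [Module K V] [Fintype ι] [Fintype κ] [DecidableEq K] (b : Basis ι K V) (v : κ → V) :
    finrank K (span K (Set.range v)) ≤ hammingNorm (b.toMatrix v) := by
  classical
  set S : Finset ι := {k | b.toMatrix v k ≠ 0}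
  have hspan : span K (Set.range v) ≤ span K (S.image b : Set V) := by
    rw [span_le, Set.range_subset_iff, coe_image]
    refine fun j => b.mem_span_image.2 fun k hk => ?_
    simp only [S, coe_filter, mem_univ, true_and, Set.mem_ofPred_eq]
    exact fun h => (Finsupp.mem_support_iff.1 hk) (congrFun h j)
  calc finrank K (span K (Set.range v)) ≤ finrank K (span K (S.image b : Set V)) :=
        Submodule.finrank_mono hspan
    _ ≤ #(S.image b) := finrank_span_finset_le_card _
    _ ≤ #S := card_image_le
    _ = hammingNorm (b.toMatrix v) := by simp only [S, hammingNorm]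

theorem natCard_le_of_le_hammingDist {ι A : Type*} [Fintype ι] [Fintype A] [DecidableEq A]
    {S : Set (ι → A)} {d : ℕ} (hS : ∀ x ∈ S, ∀ y ∈ S, x ≠ y → d ≤ hammingDist x y) :
    Nat.card S ≤ Fintype.card A ^ (Fintype.card ι - (d - 1)) := by
  classical
  obtain ⟨T, -, hT⟩ := exists_subset_card_eq (s := (univ : Finset ι))
    (n := Fintype.card ι - (d - 1)) (by simp)
  have hrestrict : Function.Injective fun (x : S) (t : T) => (x : ι → A) t := by
    rintro ⟨x, hx⟩ ⟨y, hy⟩ hxy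
    by_contra hne
    have hne' : x ≠ y := fun h => hne (Subtype.ext h)
    have hdist : hammingDist x y ≤ #Tᶜ := card_le_card fun i hi => by
      simp only [mem_filter, mem_univ, true_and] at hi
      exact mem_compl.2 fun hiT => hi (congrFun hxy ⟨i, hiT⟩)
    have := hS x hx y hy hne'
    have := hammingDist_pos.2 hne'
    rw [card_compl, hT] at hdist
    omega
  simpa [hT] using Nat.card_le_card_of_injective _ hrestrict

section SumRank

variable {Fq F : Type*} [Field Fq] [Field F] [Algebra Fq F] {g r0 : ℕ} {r : Fin g → ℕ}

theorem srWeight_pos {x : ∀ i : Fin g, Fin (r i) → F} (hx : x ≠ 0) : 0 < srWeight Fq x := by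
  obtain ⟨i, j, hij⟩ : ∃ i j, x i j ≠ 0 := by
    by_contra! h
    exact hx (funext fun i => funext (h i))
  refine Finset.sum_pos' (fun _ _ => Nat.zero_le _) ⟨i, mem_univ i, ?_⟩
  refine Nat.pos_of_ne_zero fun h0 => hij ?_
  have := Module.Finite.span_of_finite Fq (Set.finite_range (x i))
  have hmem : x i j ∈ span Fq (Set.range (x i)) := subset_span ⟨j, rfl⟩
  rwa [finrank_eq_zero.1 h0, mem_bot] at hmem

theorem srWeight_le_sum (x : ∀ i : Fin g, Fin (r i) → F) : srWeight Fq x ≤ ∑ i, r i :=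
  sum_le_sum fun i _ => (finrank_range_le_card (x i)).trans (Fintype.card_fin _).le

theorem srWeight_le_mul_finrank [Module.Finite Fq F] (x : ∀ i : Fin g, Fin (r i) → F) :
    srWeight Fq x ≤ g * finrank Fq F := by
  unfold srWeight
  simpa using sum_le_sum fun i (_ : i ∈ univ) => Submodule.finrank_le (span Fq (Set.range (x i)))

theorem srMinDist_le_srWeight_sub {C : Set (∀ i : Fin g, Fin (r i) → F)} {c c'} (hc : c ∈ C)
    (hc' : c' ∈ C) (hne : c ≠ c') : srMinDist Fq C ≤ srWeight Fq (c - c') :=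
  Nat.sInf_le ⟨c, hc, c', hc', hne, rfl⟩

theorem exists_srWeight_sub_eq_srMinDist {C : Set (∀ i : Fin g, Fin (r i) → F)}
    (hC : C.Nontrivial) : ∃ c ∈ C, ∃ c' ∈ C, c ≠ c' ∧ srWeight Fq (c - c') = srMinDist Fq C := by
  obtain ⟨c, hc, c', hc', hne⟩ := hC
  have hmem : srMinDist Fq C ∈ {w | ∃ c ∈ C, ∃ c' ∈ C, c ≠ c' ∧ w = srWeight Fq (c - c')} :=
    Nat.sInf_mem ⟨_, c, hc, c', hc', hne, rfl⟩
  obtain ⟨a, ha, a', ha', hne', h⟩ := hmem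
  exact ⟨a, ha, a', ha', hne', h.symm⟩

section Transpose

variable {ι : Type*}

noncomputable def blockTranspose (b : Basis ι Fq F) (x : Fin g → Fin r0 → F) :
    Fin g × ι → Fin r0 → Fq :=
  fun p => b.toMatrix (x p.1) p.2

theorem blockTranspose_injective (b : Basis ι Fq F) :
    Function.Injective (blockTranspose (g := g) (r0 := r0) b) := by
  intro x y h
  ext i j
  exact b.repr.injective <| Finsupp.ext fun k => congrFun (congrFun h (i, k)) j

theorem blockTranspose_sub (b : Basis ι Fq F) (x y : Fin g → Fin r0 → F) :
    blockTranspose b (x - y) = blockTranspose b x - blockTranspose b y := by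
  ext p j
  simp [blockTranspose, Basis.toMatrix_apply]

theorem hammingNorm_blockTranspose [Fintype ι] [DecidableEq Fq] (b : Basis ι Fq F)
    (x : Fin g → Fin r0 → F) :
    hammingNorm (blockTranspose b x) = ∑ i, hammingNorm (b.toMatrix (x i)) := by
  rw [hammingNorm, card_filter, Fintype.sum_prod_type]
  exact sum_congr rfl fun i _ => (card_filter _ _).symm

theorem srWeight_sub_le_hammingDist_blockTranspose [Fintype ι] [DecidableEq Fq]
    (b : Basis ι Fq F) (x y : Fin g → Fin r0 → F) :
    srWeight Fq (x - y) ≤ hammingDist (blockTranspose b x) (blockTranspose b y) := by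
  rw [hammingDist_comm, hammingDist_eq_hammingNorm, neg_add_eq_sub, ← blockTranspose_sub,
    hammingNorm_blockTranspose]
  exact sum_le_sum fun i _ => finrank_span_range_le_hammingNorm_toMatrix b _

end Transpose

theorem natCard_le_of_srMinDist [Fintype Fq] [Module.Finite Fq F] (C : Set (Fin g → Fin r0 → F)) :
    Nat.card C ≤ (Fintype.card Fq ^ r0) ^
      (g * finrank Fq F - (srMinDist Fq (r := fun _ => r0) C - 1)) := by
  classical
  let b := Module.finBasis Fq F
  have hdist : ∀ u ∈ blockTranspose b '' C, ∀ v ∈ blockTranspose b '' C, u ≠ v →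
      srMinDist Fq (r := fun _ => r0) C ≤ hammingDist u v := by
    rintro _ ⟨c, hc, rfl⟩ _ ⟨c', hc', rfl⟩ hne
    exact (srMinDist_le_srWeight_sub hc hc' (ne_of_apply_ne _ hne)).trans
      (srWeight_sub_le_hammingDist_blockTranspose b c c')
  have hcard := natCard_le_of_le_hammingDist hdist
  rw [Nat.card_image_of_injective (blockTranspose_injective b)] at hcard
  simpa using hcard

end SumRank

theorem le_of_mul_tsub_add_one_le_mul_tsub_add_one {g r m d : ℕ} (hd : 1 < d) (hdr : d ≤ g * r)
    (hdm : d ≤ g * m) (h : m * (g * r - d + 1) ≤ r * (g * m - d + 1)) : r ≤ m := by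
  zify [hdr, hdm] at h
  nlinarith

theorem second_singleton_bound_equal_blocks_general
    {Fq F : Type*} [Field Fq] [Fintype Fq] [Field F] [Fintype F] [Algebra Fq F]
    {g r0 : ℕ}
    (C : Set (∀ _ : Fin g, Fin r0 → F)) (hC : C.Nontrivial) :
    (Nat.card C ≤
        (Fintype.card Fq ^ r0) ^
          (g * Module.finrank Fq F - srMinDist Fq (r := fun _ => r0) C + 1)) ∧
      (1 < srMinDist Fq (r := fun _ => r0) C →
        Nat.card C =
          Fintype.card Fq ^
            (Module.finrank Fq F * (g * r0 - srMinDist Fq (r := fun _ => r0) C + 1)) →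
        r0 ≤ Module.finrank Fq F) := by
  obtain ⟨c, -, c', -, hne, hd⟩ := exists_srWeight_sub_eq_srMinDist (Fq := Fq) hC
  set d := srMinDist Fq (r := fun _ => r0) C
  have hd_pos : 0 < d := hd ▸ srWeight_pos (sub_ne_zero.2 hne)
  have hd_le_r0 : d ≤ g * r0 := hd ▸ by simpa using srWeight_le_sum (Fq := Fq) (c - c')
  have hd_le_m : d ≤ g * finrank Fq F := hd ▸ srWeight_le_mul_finrank (c - c')
  have hbound : Nat.card C ≤ (Fintype.card Fq ^ r0) ^ (g * finrank Fq F - d + 1) := by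
    have h := natCard_le_of_srMinDist (Fq := Fq) C
    rwa [show g * finrank Fq F - (d - 1) = g * finrank Fq F - d + 1 by omega] at h
  refine ⟨hbound, fun hd_gt hMSRD => ?_⟩
  refine le_of_mul_tsub_add_one_le_mul_tsub_add_one hd_gt hd_le_r0 hd_le_m ?_
  refine (Nat.pow_le_pow_iff_right (Fintype.one_lt_card (α := Fq))).1 ?_
  rw [← hMSRD, pow_mul]
  exact hbound

/-- for equal block lengths `r_1 = … = r_g = N/g = r0`, every code
satisfies `|C| ≤ (q^{r0})^{gm − d_SR(C) + 1}`; consequently an MSRD code with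
`d_SR(C) > 1` can exist only if `m ≥ r0`. -/
theorem second_singleton_bound_equal_blocks
    {Fq F : Type*} [Field Fq] [Fintype Fq] [Field F] [Fintype F] [Algebra Fq F]
    {g r0 : ℕ} (hg : 0 < g)
    (C : Set (∀ _ : Fin g, Fin r0 → F)) (hC : C.Nontrivial) :
    (Nat.card C ≤
        (Fintype.card Fq ^ r0) ^
          (g * Module.finrank Fq F - srMinDist Fq (r := fun _ => r0) C + 1)) ∧
      (1 < srMinDist Fq (r := fun _ => r0) C →
        Nat.card C =
          Fintype.card Fq ^
            (Module.finrank Fq F * (g * r0 - srMinDist Fq (r := fun _ => r0) C + 1)) →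
        r0 ≤ Module.finrank Fq F) :=
  second_singleton_bound_equal_blocks_general C hC
end

section
/- If C ⊆ F_{q^m}^N is MSRD for the partition N = Σ_{i=1}^g r_i, then C is MSRD for any refined partition N = Σ_{i=1}^g Σ_{j=1}^{g_i} r_{i,j} with r_i = Σ_j r_{i,j}. -/
/-- Sum-rank weight of `c : ι → F` over `Fq`, for the partition of the coordinate
set `ι` into blocks given by the fibers of `π : ι → κ`: the sum over the blocks of
the `Fq`-dimension of the `Fq`-span of the entries of `c` in that block (i.e. the
rank of the matrix representation of the block over an `Fq`-basis of `F`). -/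
noncomputable def srWeightP (Fq : Type*) [Field Fq] {F : Type*} [Field F] [Algebra Fq F]
    {ι κ : Type*} [Fintype κ] (π : ι → κ) (c : ι → F) : ℕ :=
  ∑ b : κ, Module.finrank Fq (Submodule.span Fq (c '' {i | π i = b}))

/-- Minimum sum-rank distance of a (possibly nonlinear) code for the partition `π`. -/
noncomputable def srMinDistP (Fq : Type*) [Field Fq] {F : Type*} [Field F] [Algebra Fq F]
    {ι κ : Type*} [Fintype κ] (π : ι → κ) (C : Set (ι → F)) : ℕ :=
  sInf {w | ∃ c ∈ C, ∃ d ∈ C, c ≠ d ∧ w = srWeightP Fq π (c - d)}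

open Finset

/-- Hamming weight (with classical decidability). -/
noncomputable def hWt {F ι : Type*} [Fintype ι] [Zero F] (v : ι → F) : ℕ :=
  letI := Classical.decEq F
  (Finset.univ.filter fun i => v i ≠ 0).card

lemma hWt_le_card {F ι : Type*} [Fintype ι] [Zero F] (v : ι → F) :
    hWt v ≤ Fintype.card ι := by
  classical
  simpa [hWt] using Finset.card_filter_le Finset.univ _

lemma hWt_pos {F ι : Type*} [Fintype ι] [Zero F] {v : ι → F} (hv : v ≠ 0) :
    0 < hWt v := by
  classical
  obtain ⟨i, hi⟩ := Function.ne_iff.mp hv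
  have hi' : v i ≠ 0 := by simpa using hi
  have : i ∈ Finset.univ.filter fun i => v i ≠ 0 := by simp [hi']
  simpa [hWt] using Finset.card_pos.mpr ⟨i, this⟩

/-- finrank of a finite sup of submodules is at most the sum of the finranks. -/
lemma finrank_finsetSup_le {K V α : Type*} [Field K] [AddCommGroup V] [Module K V]
    [FiniteDimensional K V] (s : Finset α) (U : α → Submodule K V) :
    Module.finrank K (s.sup U : Submodule K V) ≤ ∑ a ∈ s, Module.finrank K (U a) := by
  classical
  induction s using Finset.cons_induction with
  | empty => simp
  | cons a s ha ih =>
    rw [Finset.sup_cons, Finset.sum_cons]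
    exact (Submodule.finrank_add_le_finrank_add_finrank _ _).trans
      (Nat.add_le_add_left ih _)

/-- Sum-rank weight is at most the Hamming weight. -/
lemma srWeightP_le_hWt (Fq : Type*) [Field Fq] {F : Type*} [Field F] [Algebra Fq F]
    [FiniteDimensional Fq F] {ι κ : Type*} [Fintype ι] [Fintype κ]
    (π : ι → κ) (v : ι → F) : srWeightP Fq π v ≤ hWt v := by
  classical
  have key : ∀ b : κ,
      Module.finrank Fq (Submodule.span Fq (v '' {i | π i = b})) ≤
        ((Finset.univ.filter fun i => v i ≠ 0).filter fun i => π i = b).card := by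
    intro b
    set T : Finset ι := (Finset.univ.filter fun i => v i ≠ 0).filter fun i => π i = b with hT
    have hle : Submodule.span Fq (v '' {i | π i = b}) ≤
        Submodule.span Fq ((T.image v : Finset F) : Set F) := by
      rw [Submodule.span_le]
      rintro x ⟨i, hi, rfl⟩
      by_cases hvi : v i = 0
      · simp [hvi]
      · apply Submodule.subset_span
        simp only [Finset.coe_image, Set.mem_image, Finset.mem_coe]
        exact ⟨i, by simp [hT, hvi, hi.out], rfl⟩
    calc Module.finrank Fq (Submodule.span Fq (v '' {i | π i = b}))
        ≤ Module.finrank Fq (Submodule.span Fq ((T.image v : Finset F) : Set F)) :=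
          Submodule.finrank_mono hle
      _ ≤ (T.image v).card := finrank_span_finset_le_card _
      _ ≤ T.card := Finset.card_image_le
  calc srWeightP Fq π v
      ≤ ∑ b : κ, ((Finset.univ.filter fun i => v i ≠ 0).filter fun i => π i = b).card :=
        Finset.sum_le_sum fun b _ => key b
    _ = (Finset.univ.filter fun i => v i ≠ 0).card :=
        (Finset.card_eq_sum_card_fiberwise (f := π) (fun i _ => Finset.mem_univ (π i))).symm
    _ = hWt v := by simp [hWt]

/-- Refining the partition can only increase the sum-rank weight. -/
lemma srWeightP_le_refine (Fq : Type*) [Field Fq] {F : Type*} [Field F] [Algebra Fq F]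
    [FiniteDimensional Fq F] {ι κ κ' : Type*} [Fintype ι] [Fintype κ] [Fintype κ']
    (π : ι → κ) (π' : ι → κ') (href : ∀ i j : ι, π' i = π' j → π i = π j)
    (v : ι → F) : srWeightP Fq π v ≤ srWeightP Fq π' v := by
  classical
  have key : ∀ b : κ,
      Module.finrank Fq (Submodule.span Fq (v '' {i | π i = b})) ≤
        ∑ b' : κ', Module.finrank Fq
          (Submodule.span Fq (v '' ({i | π' i = b'} ∩ {i | π i = b}))) := by
    intro b
    have hU : {i | π i = b} = ⋃ b' : κ', ({i | π' i = b'} ∩ {i | π i = b}) := by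
      ext i; simp
    conv_lhs => rw [hU, Set.image_iUnion, Submodule.span_iUnion, ← Finset.sup_univ_eq_iSup]
    exact finrank_finsetSup_le (K := Fq) (V := F) (Finset.univ : Finset κ') _
  calc srWeightP Fq π v
      ≤ ∑ b : κ, ∑ b' : κ', Module.finrank Fq
          (Submodule.span Fq (v '' ({i | π' i = b'} ∩ {i | π i = b}))) :=
        Finset.sum_le_sum fun b _ => key b
    _ = ∑ b' : κ', ∑ b : κ, Module.finrank Fq
          (Submodule.span Fq (v '' ({i | π' i = b'} ∩ {i | π i = b}))) :=
        Finset.sum_comm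
    _ ≤ srWeightP Fq π' v := by
        apply Finset.sum_le_sum
        intro b' _
        by_cases hne : {i | π' i = b'}.Nonempty
        · obtain ⟨i₀, hi₀⟩ := hne
          have hsum : ∀ b : κ, b ≠ π i₀ →
              Module.finrank Fq
                (Submodule.span Fq (v '' ({i | π' i = b'} ∩ {i | π i = b}))) = 0 := by
            intro b hb
            have hempty : {i | π' i = b'} ∩ {i | π i = b} = (∅ : Set ι) := by
              ext j
              simp only [Set.mem_inter_iff, Set.mem_setOf_eq, Set.mem_empty_iff_false,
                iff_false, not_and]
              intro hj hjb
              exact hb (hjb ▸ href j i₀ (hj.trans hi₀.symm))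
            rw [hempty]
            simp
          rw [Finset.sum_eq_single_of_mem (π i₀) (Finset.mem_univ _)
            (fun b _ hb => hsum b hb)]
          have hsubset : {i | π' i = b'} ∩ {i | π i = π i₀} = {i | π' i = b'} := by
            ext j
            simp only [Set.mem_inter_iff, Set.mem_setOf_eq, and_iff_left_iff_imp]
            intro hj
            exact href j i₀ (hj.trans hi₀.symm)
          rw [hsubset]
        · have hempty : {i | π' i = b'} = (∅ : Set ι) :=
            Set.not_nonempty_iff_eq_empty.mp hne
          rw [hempty]
          have hz : ∀ b : κ, Module.finrank Fq
              (Submodule.span Fq (v '' ((∅ : Set ι) ∩ {i | π i = b}))) = 0 := by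
            intro b
            rw [Set.empty_inter, Set.image_empty, Submodule.span_empty, finrank_bot]
          simp [hz]

/-- a code that is MSRD (attains the sum-rank Singleton bound
`|C| = q^{m(N − d_SR(C) + 1)}`) for a partition `π` is also MSRD for any
refinement `π'` of `π`. -/
theorem msrd_of_refines
    {Fq F : Type*} [Field Fq] [Fintype Fq] [Field F] [Fintype F] [Algebra Fq F]
    {ι κ κ' : Type*} [Fintype ι] [Fintype κ] [Fintype κ'] (π : ι → κ) (π' : ι → κ')
    (href : ∀ i j : ι, π' i = π' j → π i = π j)
    (C : Set (ι → F)) (hC : C.Nontrivial)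
    (hMSRD : Nat.card C =
      Fintype.card Fq ^
        (Module.finrank Fq F * (Fintype.card ι - srMinDistP Fq π C + 1))) :
    Nat.card C =
      Fintype.card Fq ^
        (Module.finrank Fq F * (Fintype.card ι - srMinDistP Fq π' C + 1)) := by
  classical
  set N := Fintype.card ι with hN
  set d := srMinDistP Fq π C with hd
  set d' := srMinDistP Fq π' C with hd'
  obtain ⟨c₀, hc₀, e₀, he₀, hne₀⟩ := hC
  -- Hamming minimum distance
  set HS : Set ℕ := {w | ∃ c ∈ C, ∃ e ∈ C, c ≠ e ∧ w = hWt (c - e)} with hHSdef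
  have hHSne : HS.Nonempty := ⟨_, c₀, hc₀, e₀, he₀, hne₀, rfl⟩
  set dH := sInf HS with hdHdef
  obtain ⟨c₁, hc₁, e₁, he₁, hne₁, hw₁⟩ := Nat.sInf_mem hHSne
  rw [← hdHdef] at hw₁
  have hdH1 : 1 ≤ dH := by
    rw [hw₁]
    exact hWt_pos (sub_ne_zero.mpr hne₁)
  have hdHN : dH ≤ N := by
    rw [hw₁]
    exact hWt_le_card _
  have hd'dH : d' ≤ dH := by
    have hmem : srWeightP Fq π' (c₁ - e₁) ∈
        {w | ∃ c ∈ C, ∃ e ∈ C, c ≠ e ∧ w = srWeightP Fq π' (c - e)} :=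
      ⟨c₁, hc₁, e₁, he₁, hne₁, rfl⟩
    refine le_trans (Nat.sInf_le hmem) ?_
    rw [hw₁]
    exact srWeightP_le_hWt Fq π' _
  have hdd' : d ≤ d' := by
    have hne' : {w | ∃ c ∈ C, ∃ e ∈ C, c ≠ e ∧ w = srWeightP Fq π' (c - e)}.Nonempty :=
      ⟨_, c₀, hc₀, e₀, he₀, hne₀, rfl⟩
    obtain ⟨c₂, hc₂, e₂, he₂, hne₂, hw₂⟩ := Nat.sInf_mem hne'
    have hmem : srWeightP Fq π (c₂ - e₂) ∈
        {w | ∃ c ∈ C, ∃ e ∈ C, c ≠ e ∧ w = srWeightP Fq π (c - e)} :=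
      ⟨c₂, hc₂, e₂, he₂, hne₂, rfl⟩
    calc d ≤ srWeightP Fq π (c₂ - e₂) := Nat.sInf_le hmem
      _ ≤ srWeightP Fq π' (c₂ - e₂) := srWeightP_le_refine Fq π π' href _
      _ = d' := hw₂.symm
  -- Singleton bound at the Hamming distance
  have hSB : Nat.card C ≤ Fintype.card F ^ (N - dH + 1) := by
    have hle : N - dH + 1 ≤ N := by omega
    obtain ⟨T, -, hTcard⟩ :=
      Finset.exists_subset_card_eq (s := (Finset.univ : Finset ι)) (n := N - dH + 1)
        (by simpa [hN] using hle)
    have hinj : Function.Injective (fun (x : C) => fun (i : T) => (x : ι → F) i) := by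
      rintro ⟨x, hx⟩ ⟨y, hy⟩ hxy
      by_contra hne
      have hxyne : x ≠ y := fun h => hne (Subtype.ext h)
      have hdHle : dH ≤ hWt (x - y) := Nat.sInf_le ⟨x, hx, y, hy, hxyne, rfl⟩
      have hsupp : (Finset.univ.filter fun i => (x - y) i ≠ 0) ⊆ Finset.univ \ T := by
        intro i hi
        simp only [Finset.mem_filter, Finset.mem_univ, true_and, Pi.sub_apply,
          ne_eq] at hi
        simp only [Finset.mem_sdiff, Finset.mem_univ, true_and]
        intro hiT
        have := congrFun hxy ⟨i, hiT⟩
        simp only at this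
        exact hi (by rw [this, sub_self])
      have hcard : hWt (x - y) ≤ N - (N - dH + 1) := by
        have h1 : hWt (x - y) ≤ (Finset.univ \ T).card := by
          rw [hWt]
          exact Finset.card_le_card hsupp
        rwa [Finset.card_sdiff_of_subset (Finset.subset_univ T), Finset.card_univ, hTcard] at h1
      omega
    calc Nat.card C ≤ Nat.card ({ x // x ∈ T } → F) :=
          Nat.card_le_card_of_injective _ hinj
      _ = Fintype.card F ^ (N - dH + 1) := by
          rw [Nat.card_eq_fintype_card, Fintype.card_fun, Fintype.card_coe, hTcard]
      _ ≤ Fintype.card F ^ (N - dH + 1) := le_rfl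
  have hcardF : Fintype.card F = Fintype.card Fq ^ Module.finrank Fq F :=
    Module.card_eq_pow_finrank
  have hFpos : 0 < Fintype.card F := Fintype.card_pos
  have e1 : Nat.card C = Fintype.card F ^ (N - d + 1) := by
    rw [hMSRD, hcardF, ← pow_mul]
  have le1 : Nat.card C ≤ Fintype.card F ^ (N - d' + 1) :=
    hSB.trans (Nat.pow_le_pow_right hFpos (by omega))
  have le2 : Fintype.card F ^ (N - d' + 1) ≤ Nat.card C := by
    rw [e1]
    exact Nat.pow_le_pow_right hFpos (by omega)
  have : Nat.card C = Fintype.card F ^ (N - d' + 1) := le_antisymm le1 le2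
  rw [this, hcardF, ← pow_mul]
end

section
/- Let C_glob = C_out · diag(A_1,...,A_g) ⊆ F^n where A_i ∈ F_q^{r_i × n_i} are full-rank over the subfield F_q, C_out ⊆ F^N, N = Σ r_i, and |C_out| = |C_glob| = |F|^k. If an erasure pattern E ⊆ [n] with remaining coordinates R_i = Γ_i \ E satisfies Σ_{i=1}^g Rk(A_i|_{R_i}) < k, then no decoder can recover every codeword of C_glob from its restriction to [n] \ E, regardless of the choice of outer code C_out. -/
/-- Rank of the submatrix of `A` given by the columns indexed by `R`. -/
noncomputable def colRank {Fq : Type*} [Field Fq] {a b : ℕ}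
    (A : Matrix (Fin a) (Fin b) Fq) (R : Finset (Fin b)) : ℕ :=
  (A.submatrix id (fun j : R => (j : Fin b))).rank

/-- Restriction of a block vector to the unerased coordinates `R_i` in each block. -/
def restrictTo {F : Type*} {g : ℕ} {n : Fin g → ℕ} (R : ∀ i : Fin g, Finset (Fin (n i)))
    (c : ∀ i : Fin g, Fin (n i) → F) : ∀ i : Fin g, (R i) → F :=
  fun i j => c i j.1

/-! On the unerased coordinates of block `i`, a codeword `c · diag(A_1, …, A_g)` of `C_glob` is
`c_i · A_i|_{R_i}`, a vector of the `F`-row space of `A_i|_{R_i}`; since `A_i` has entries in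
`F_q`, that space has `F`-dimension at most `Rk(A_i|_{R_i})`. So the restrictions of the codewords
take at most `|F|^(Σ_i Rk(A_i|_{R_i})) < |F|^k = |C_glob|` values, and restriction cannot be
injective on `C_glob`. -/

open Module Submodule Matrix

theorem finrank_span_le_finrank_span_of_tower (K : Type*) {L V : Type*} [Field K] [Field L]
    [Algebra K L] [AddCommGroup V] [Module K V] [Module L V] [IsScalarTower K L V]
    {s : Set V} (hs : s.Finite) :
    finrank L (span L s) ≤ finrank K (span K s) := by
  obtain ⟨t, hts, hspan, hli⟩ := exists_linearIndependent K s
  have := (hs.subset hts).fintype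
  calc finrank L (span L s) = finrank L (span L t) := by
        rw [← span_span_of_tower K, ← hspan, span_span_of_tower]
    _ ≤ t.toFinset.card := finrank_span_le_card t
    _ = finrank K (span K s) := by rw [← hspan, finrank_span_set_eq_card hli]

theorem Matrix.rank_map_algebraMap_le {K L m n : Type*} [Field K] [Field L] [Algebra K L]
    [Fintype n] (M : Matrix m n K) : (M.map (algebraMap K L)).rank ≤ M.rank := by
  let φ := LinearMap.compLeft (Algebra.linearMap K L) m
  have hcols : Set.range (M.map (algebraMap K L)).col = φ '' Set.range M.col := by
    rw [← Set.range_comp]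
    rfl
  have := Module.Finite.span_of_finite K (Set.finite_range M.col)
  rw [rank_eq_finrank_span_cols, rank_eq_finrank_span_cols, hcols]
  calc finrank L (span L (φ '' Set.range M.col))
      ≤ finrank K (span K (φ '' Set.range M.col)) :=
        finrank_span_le_finrank_span_of_tower K ((Set.finite_range _).image _)
    _ ≤ finrank K (span K (Set.range M.col)) := by
        rw [← map_span]
        exact finrank_map_le φ _

theorem Matrix.card_range_vecMul {F m n : Type*} [Field F] [Fintype F] [Fintype m] [Fintype n]
    (M : Matrix m n F) : Nat.card (Set.range (· ᵥ* M)) = Fintype.card F ^ M.rank := by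
  rw [rank_eq_finrank_span_row, ← range_vecMulLinear, ← Nat.card_eq_fintype_card,
    ← Module.natCard_eq_pow_finrank]
  rfl

theorem restrictTo_blockMul {Fq F : Type*} [Field Fq] [Field F] [Algebra Fq F]
    {g : ℕ} {r n : Fin g → ℕ} (A : ∀ i : Fin g, Matrix (Fin (r i)) (Fin (n i)) Fq)
    (R : ∀ i : Fin g, Finset (Fin (n i))) (c : ∀ i : Fin g, Fin (r i) → F) :
    restrictTo R (blockMul c A) =
      Pi.map (fun i x => x ᵥ* ((A i).submatrix id ((↑) : R i → Fin (n i))).map (algebraMap Fq F))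
        c :=
  rfl

theorem card_range_restrictTo_blockMul_le {Fq F : Type*} [Field Fq] [Field F] [Fintype F]
    [Algebra Fq F] {g : ℕ} {r n : Fin g → ℕ}
    (A : ∀ i : Fin g, Matrix (Fin (r i)) (Fin (n i)) Fq) (R : ∀ i : Fin g, Finset (Fin (n i))) :
    Nat.card (Set.range fun c : ∀ i, Fin (r i) → F => restrictTo R (blockMul c A)) ≤
      Fintype.card F ^ ∑ i, colRank (A i) (R i) := by
  simp_rw [restrictTo_blockMul, Set.range_piMap, Nat.card_congr (Equiv.Set.univPi _), Nat.card_pi,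
    card_range_vecMul, ← Finset.prod_pow_eq_pow_sum]
  gcongr with i
  · exact Fintype.card_pos
  · exact rank_map_algebraMap_le _

theorem no_decoder_of_rank_lt_general
    {Fq F : Type*} [Field Fq] [Field F] [Fintype F] [Algebra Fq F]
    {g : ℕ} {r n : Fin g → ℕ} (k : ℕ)
    (A : ∀ i : Fin g, Matrix (Fin (r i)) (Fin (n i)) Fq)
    (R : ∀ i : Fin g, Finset (Fin (n i)))
    (hrank : ∑ i, colRank (A i) (R i) < k) :
    ∀ Cout : Set (∀ i : Fin g, Fin (r i) → F),
      Nat.card Cout = Fintype.card F ^ k →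
      Nat.card ((fun c => blockMul c A) '' Cout) = Nat.card Cout →
      ¬ Set.InjOn (restrictTo R) ((fun c => blockMul c A) '' Cout) := by
  intro Cout hCout hCglob hinj
  have hsub : restrictTo R '' ((fun c => blockMul c A) '' Cout) ⊆
      Set.range fun c => restrictTo R (blockMul c A) := by
    rw [Set.image_image]
    exact Set.image_subset_range _ _
  have hle := (Nat.card_mono (Set.toFinite _) hsub).trans (card_range_restrictTo_blockMul_le A R)
  rw [Nat.card_image_of_injOn hinj, hCglob, hCout] at hle
  exact (Nat.pow_lt_pow_right Fintype.one_lt_card hrank).not_ge hle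

/-- if `C_glob = C_out · diag(A_1,…,A_g)` with `|C_out| = |C_glob| = |F|^k`
and the unerased coordinates `R_i` satisfy `Σ_i Rk(A_i|_{R_i}) < k`, then no decoder
can recover every codeword of `C_glob` from its unerased coordinates (the restriction
map is not injective on `C_glob`), regardless of the choice of outer code. -/
theorem no_decoder_of_rank_lt
    {Fq F : Type*} [Field Fq] [Fintype Fq] [Field F] [Fintype F] [Algebra Fq F]
    {g : ℕ} {r n : Fin g → ℕ} (k : ℕ)
    (A : ∀ i : Fin g, Matrix (Fin (r i)) (Fin (n i)) Fq) (hA : ∀ i, (A i).rank = r i)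
    (R : ∀ i : Fin g, Finset (Fin (n i)))
    (hrank : ∑ i, colRank (A i) (R i) < k) :
    ∀ Cout : Set (∀ i : Fin g, Fin (r i) → F),
      Nat.card Cout = Fintype.card F ^ k →
      Nat.card ((fun c => blockMul c A) '' Cout) = Nat.card Cout →
      ¬ Set.InjOn (restrictTo R) ((fun c => blockMul c A) '' Cout) :=
  no_decoder_of_rank_lt_general k A R hrank
end

section
/- Suppose each local code C_i is an (r_i + δ_i − 1, r_i) MDS code over F_q, with r_1 ≤ r_2 ≤ ... ≤ r_g and δ_1 ≥ δ_2 ≥ ... ≥ δ_g, and let 1 ≤ k ≤ Σ r_i. Let ℓ ∈ {0,...,g−1} be the unique integer with Σ_{i=1}^ℓ r_i < k ≤ Σ_{i=1}^{ℓ+1} r_i. Then e(A,k) = n − k − Σ_{i=1}^ℓ (δ_i − 1), where n = Σ_i (r_i + δ_i − 1), A = diag(A_1,...,A_g) with A_i a generator matrix of C_i, and e(A,k) = max{e : every set R of n − e coordinates satisfies Rk(A|_R) ≥ k}. -/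
/-- `e(A,k)`: the largest number `e` of erasures such that every set `R` of `n − e`
unerased coordinates satisfies `Rk(A|_R) ≥ k`, where `A = diag(A_1,…,A_g)`. -/
noncomputable def eMax {Fq : Type*} [Field Fq] {g : ℕ} {r n : Fin g → ℕ}
    (A : ∀ i : Fin g, Matrix (Fin (r i)) (Fin (n i)) Fq) (k : ℕ) : ℕ :=
  sSup {e | e ≤ ∑ i, n i ∧
    ∀ R : ∀ i : Fin g, Finset (Fin (n i)),
      (∑ i, (R i).card) = (∑ i, n i) - e → k ≤ ∑ i, colRank (A i) (R i)}

namespace EMaxAux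

lemma orderEmb_le {c G : ℕ} (e : Fin c ↪o Fin G) : ∀ (jv : ℕ) (hj : jv < c),
    jv ≤ (e ⟨jv, hj⟩ : ℕ) := by
  intro jv
  induction jv with
  | zero => intro hj; exact Nat.zero_le _
  | succ m ih =>
    intro hj
    have hm : m < c := Nat.lt_of_succ_lt hj
    have h1 := ih hm
    have h2 : e ⟨m, hm⟩ < e ⟨m + 1, hj⟩ := e.strictMono (by simp [Fin.mk_lt_mk])
    have h3 : (e ⟨m, hm⟩ : ℕ) < (e ⟨m + 1, hj⟩ : ℕ) := h2
    omega

lemma sum_orderEmb {G : ℕ} (S : Finset (Fin G)) (f : Fin G → ℕ) :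
    ∑ i ∈ S, f i = ∑ j : Fin S.card, f (S.orderEmbOfFin rfl j) := by
  have himg : Finset.image (S.orderEmbOfFin rfl) Finset.univ = S := by
    ext i
    simp only [Finset.mem_image, Finset.mem_univ, true_and]
    constructor
    · rintro ⟨j, rfl⟩; exact S.orderEmbOfFin_mem rfl j
    · intro hi
      have := S.range_orderEmbOfFin rfl
      have : i ∈ Set.range (S.orderEmbOfFin rfl) := by rw [this]; exact hi
      obtain ⟨j, hj⟩ := this
      exact ⟨j, hj⟩
  conv_lhs => rw [← himg]
  rw [Finset.sum_image (fun a _ b _ h => (S.orderEmbOfFin rfl).injective h)]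

lemma filter_lt_eq_image {G t : ℕ} (htG : t ≤ G) :
    Finset.univ.filter (fun i : Fin G => (i : ℕ) < t)
      = Finset.image (Fin.castLE htG) Finset.univ := by
  ext i
  simp only [Finset.mem_filter, Finset.mem_univ, true_and, Finset.mem_image]
  constructor
  · intro hi; exact ⟨⟨(i : ℕ), hi⟩, Fin.ext rfl⟩
  · rintro ⟨j, rfl⟩; exact j.isLt

lemma card_filter_val_lt (n t : ℕ) :
    (Finset.univ.filter fun j : Fin n => (j : ℕ) < t).card = min t n := by
  rcases le_or_gt t n with h | h
  · rw [filter_lt_eq_image h, Finset.card_image_of_injective _ (Fin.castLE_injective h)]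
    simp [min_eq_left h]
  · have : (Finset.univ.filter fun j : Fin n => (j : ℕ) < t) = Finset.univ := by
      ext j; simp only [Finset.mem_filter, Finset.mem_univ, true_and, iff_true]
      omega
    rw [this]; simp [min_eq_right (le_of_lt h)]

lemma sum_first_le {G : ℕ} (f : Fin G → ℕ) (hf : Monotone f) (S : Finset (Fin G))
    (t : ℕ) (ht : t ≤ S.card) :
    ∑ i ∈ Finset.univ.filter (fun i : Fin G => (i : ℕ) < t), f i ≤ ∑ i ∈ S, f i := by
  have hSG : S.card ≤ G := by simpa using S.card_le_univ
  have htG : t ≤ G := le_trans ht hSG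
  rw [filter_lt_eq_image htG,
    Finset.sum_image (fun a _ b _ h => Fin.castLE_injective htG h),
    sum_orderEmb S f]
  set e := S.orderEmbOfFin rfl with he
  calc ∑ j : Fin t, f (Fin.castLE htG j)
      ≤ ∑ j : Fin t, f (e (Fin.castLE ht j)) := by
        refine Finset.sum_le_sum fun j _ => hf ?_
        have := orderEmb_le e (j : ℕ) (lt_of_lt_of_le j.isLt ht)
        exact Fin.le_def.mpr this
    _ = ∑ j ∈ Finset.image (Fin.castLE ht) Finset.univ, f (e j) := by
        rw [Finset.sum_image (fun a _ b _ h => Fin.castLE_injective ht h)]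
    _ ≤ ∑ j : Fin S.card, f (e j) :=
        Finset.sum_le_sum_of_subset (Finset.subset_univ _)

lemma sum_le_first {G : ℕ} (f : Fin G → ℕ) (hf : Antitone f) (S : Finset (Fin G))
    (t : ℕ) (ht : S.card ≤ t) :
    ∑ i ∈ S, f i ≤ ∑ i ∈ Finset.univ.filter (fun i : Fin G => (i : ℕ) < t), f i := by
  have hSG : S.card ≤ G := by simpa using S.card_le_univ
  rw [sum_orderEmb S f]
  set e := S.orderEmbOfFin rfl with he
  calc ∑ j : Fin S.card, f (e j)
      ≤ ∑ j : Fin S.card, f (Fin.castLE hSG j) := by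
        refine Finset.sum_le_sum fun j _ => hf ?_
        have := orderEmb_le e (j : ℕ) j.isLt
        exact Fin.le_def.mpr (by simpa using this)
    _ = ∑ j ∈ Finset.image (Fin.castLE hSG) Finset.univ, f j := by
        rw [Finset.sum_image (fun a _ b _ h => Fin.castLE_injective hSG h)]
    _ ≤ ∑ i ∈ Finset.univ.filter (fun i : Fin G => (i : ℕ) < t), f i := by
        refine Finset.sum_le_sum_of_subset fun i hi => ?_
        simp only [Finset.mem_image, Finset.mem_univ, true_and] at hi
        obtain ⟨j, rfl⟩ := hi
        simp only [Finset.mem_filter, Finset.mem_univ, true_and]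
        exact lt_of_lt_of_le (by simpa using j.isLt) ht

lemma shrink {g : ℕ} {n : Fin g → ℕ} :
    ∀ (d : ℕ) (S : ∀ i, Finset (Fin (n i))) (M : ℕ),
      (∑ i, (S i).card) = M + d →
      ∃ R : ∀ i, Finset (Fin (n i)), (∀ i, R i ⊆ S i) ∧ ∑ i, (R i).card = M := by
  intro d
  induction d with
  | zero => exact fun S M h => ⟨S, fun _ => Finset.Subset.refl _, by simpa using h⟩
  | succ d ih =>
    intro S M h
    have hne : ∃ i, (S i).Nonempty := by
      by_contra hc
      push_neg at hc
      have : ∀ i, (S i).card = 0 := fun i => by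
        rw [Finset.card_eq_zero]; exact hc i
      simp only [this, Finset.sum_const_zero] at h
      omega
    obtain ⟨i0, x, hx⟩ := hne
    classical
    set S' : ∀ i, Finset (Fin (n i)) := Function.update S i0 ((S i0).erase x) with hS'
    have hsum' : ∑ i, (S' i).card = M + d := by
      have h1 : ∑ i, (S' i).card
          = ((S i0).erase x).card + ∑ i ∈ Finset.univ.erase i0, (S i).card := by
        rw [hS']
        rw [← Finset.add_sum_erase _ _ (Finset.mem_univ i0)]
        simp only [Function.update_self]
        congr 1
        exact Finset.sum_congr rfl fun i hi =>
          by rw [Function.update_of_ne (Finset.ne_of_mem_erase hi)]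
      have h2 : ∑ i, (S i).card
          = (S i0).card + ∑ i ∈ Finset.univ.erase i0, (S i).card := by
        rw [← Finset.add_sum_erase _ _ (Finset.mem_univ i0)]
      have h3 : ((S i0).erase x).card = (S i0).card - 1 := Finset.card_erase_of_mem hx
      have h4 : 1 ≤ (S i0).card := Finset.card_pos.mpr ⟨x, hx⟩
      omega
    obtain ⟨R, hsub, hcard⟩ := ih S' M hsum'
    refine ⟨R, fun i => ?_, hcard⟩
    refine (hsub i).trans ?_
    rw [hS']
    by_cases hi : i = i0
    · subst hi; simp only [Function.update_self]; exact Finset.erase_subset _ _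
    · rw [Function.update_of_ne hi]

end EMaxAux

/-- if each `A_i` generates an `(r_i + δ_i − 1, r_i)` MDS code over
`F_q`, with `r_1 ≤ … ≤ r_g` and `δ_1 ≥ … ≥ δ_g`, and `ℓ` is the unique index with
`Σ_{i≤ℓ} r_i < k ≤ Σ_{i≤ℓ+1} r_i`, then `e(A,k) = n − k − Σ_{i≤ℓ} (δ_i − 1)`. -/
theorem eMax_of_mds_local_codes
    {Fq : Type*} [Field Fq] [Fintype Fq]
    {g : ℕ} (r δ : Fin g → ℕ) (hδ : ∀ i, 1 ≤ δ i) (hr : ∀ i, 1 ≤ r i)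
    (hrmono : ∀ i j : Fin g, i ≤ j → r i ≤ r j)
    (hδmono : ∀ i j : Fin g, i ≤ j → δ j ≤ δ i)
    (A : ∀ i : Fin g, Matrix (Fin (r i)) (Fin (r i + δ i - 1)) Fq)
    (hMDS : ∀ (i : Fin g) (R : Finset (Fin (r i + δ i - 1))),
      colRank (A i) R = min (r i) R.card)
    (k : ℕ) (hk : 1 ≤ k) (hkN : k ≤ ∑ i, r i)
    (ℓ : ℕ) (hℓg : ℓ < g)
    (hℓ1 : ∑ i ∈ Finset.univ.filter (fun i : Fin g => (i : ℕ) < ℓ), r i < k)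
    (hℓ2 : k ≤ ∑ i ∈ Finset.univ.filter (fun i : Fin g => (i : ℕ) < ℓ + 1), r i) :
    eMax A k = (∑ i, (r i + δ i - 1)) - k -
      ∑ i ∈ Finset.univ.filter (fun i : Fin g => (i : ℕ) < ℓ), (δ i - 1) := by
  classical
  open EMaxAux in
  set N := ∑ i, (r i + δ i - 1) with hNdef
  set K := ∑ i, r i with hKdef
  set Δ := ∑ i ∈ Finset.univ.filter (fun i : Fin g => (i : ℕ) < ℓ), (δ i - 1) with hΔdef
  set Rℓ := ∑ i ∈ Finset.univ.filter (fun i : Fin g => (i : ℕ) < ℓ), r i with hRℓdef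
  have hN : N = K + ∑ i, (δ i - 1) := by
    rw [hNdef, hKdef, ← Finset.sum_add_distrib]
    exact Finset.sum_congr rfl fun i _ => by have := hδ i; omega
  have hΔD : Δ ≤ ∑ i, (δ i - 1) :=
    Finset.sum_le_sum_of_subset (Finset.filter_subset _ _)
  have hkΔN : k + Δ ≤ N := by omega
  -- split hℓ2
  have hfsplit : Finset.univ.filter (fun i : Fin g => (i : ℕ) < ℓ + 1)
      = insert (⟨ℓ, hℓg⟩ : Fin g) (Finset.univ.filter (fun i : Fin g => (i : ℕ) < ℓ)) := by
    ext i
    simp only [Finset.mem_filter, Finset.mem_univ, true_and, Finset.mem_insert, Fin.ext_iff]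
    omega
  have hℓ2' : k ≤ r ⟨ℓ, hℓg⟩ + Rℓ := by
    rw [hfsplit, Finset.sum_insert (by simp)] at hℓ2
    exact hℓ2
  have hmds_sum : ∀ R : (∀ i : Fin g, Finset (Fin (r i + δ i - 1))),
      ∑ i, colRank (A i) (R i) = ∑ i, min (r i) ((R i).card) :=
    fun R => Finset.sum_congr rfl fun i _ => hMDS i (R i)
  have hcard_le : ∀ (i : Fin g) (R : Finset (Fin (r i + δ i - 1))),
      R.card ≤ r i + δ i - 1 := fun i R => by simpa using R.card_le_univ
  set s := {e | e ≤ N ∧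
    ∀ R : ∀ i : Fin g, Finset (Fin (r i + δ i - 1)),
      (∑ i, (R i).card) = N - e → k ≤ ∑ i, colRank (A i) (R i)} with hsdef
  have hgoal : eMax A k = sSup s := rfl
  rw [hgoal]
  set estar := N - k - Δ with hestar
  -- membership of estar
  have hmem : estar ∈ s := by
    constructor
    · omega
    · intro R hR
      rw [hmds_sum]
      have hRsum : ∑ i, (R i).card = k + Δ := by omega
      set S := Finset.univ.filter (fun i : Fin g => r i < (R i).card) with hSdef
      by_cases hS : ℓ + 1 ≤ S.card
      · calc k ≤ ∑ i ∈ Finset.univ.filter (fun i : Fin g => (i : ℕ) < ℓ + 1), r i := hℓ2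
          _ ≤ ∑ i ∈ S, r i := sum_first_le r (fun a b h => hrmono a b h) S (ℓ + 1) hS
          _ = ∑ i ∈ S, min (r i) ((R i).card) := by
              refine Finset.sum_congr rfl fun i hi => ?_
              have := (Finset.mem_filter.mp hi).2
              exact (min_eq_left (le_of_lt this)).symm
          _ ≤ ∑ i, min (r i) ((R i).card) :=
              Finset.sum_le_sum_of_subset (Finset.subset_univ S)
      · push_neg at hS
        have hS' : S.card ≤ ℓ := by omega
        set w : Fin g → ℕ := fun i => (R i).card - min (r i) ((R i).card) with hwdef
        have hsum_split : ∑ i, (R i).card = (∑ i, min (r i) ((R i).card)) + ∑ i, w i := by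
          rw [← Finset.sum_add_distrib]
          refine Finset.sum_congr rfl fun i _ => ?_
          have hwi : w i = (R i).card - min (r i) ((R i).card) := rfl
          have : min (r i) ((R i).card) ≤ (R i).card := min_le_right _ _
          omega
        have hw0 : ∀ i ∈ Finset.univ, i ∉ S → w i = 0 := by
          intro i _ hi
          have : ¬ r i < (R i).card := by
            intro hc; exact hi (Finset.mem_filter.mpr ⟨Finset.mem_univ i, hc⟩)
          have hle : (R i).card ≤ r i := by omega
          simp [hwdef, min_eq_right hle]
        have hsumw : ∑ i, w i = ∑ i ∈ S, w i :=
          (Finset.sum_subset (Finset.subset_univ S) hw0).symm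
        have hwle : ∀ i ∈ S, w i ≤ δ i - 1 := by
          intro i hi
          have h1 : r i < (R i).card := (Finset.mem_filter.mp hi).2
          have h2 : (R i).card ≤ r i + δ i - 1 := hcard_le i (R i)
          have := hδ i
          simp only [hwdef, min_eq_left (le_of_lt h1)]
          omega
        have h3 : ∑ i ∈ S, w i ≤ ∑ i ∈ S, (δ i - 1) := Finset.sum_le_sum hwle
        have h4 : ∑ i ∈ S, (δ i - 1) ≤ Δ :=
          sum_le_first (fun i => δ i - 1)
            (fun a b h => Nat.sub_le_sub_right (hδmono a b h) 1) S ℓ hS'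
        omega
  -- upper bound
  have hub : ∀ e ∈ s, e ≤ estar := by
    intro e he
    obtain ⟨heN, hprop⟩ := he
    by_contra hcon
    push_neg at hcon
    set m := k - 1 - Rℓ with hm
    have hmr : m ≤ r ⟨ℓ, hℓg⟩ := by omega
    set mB : Fin g → ℕ := fun i =>
      if (i : ℕ) < ℓ then r i + δ i - 1 else if (i : ℕ) = ℓ then m else 0 with hmB
    have hmB_le : ∀ i, mB i ≤ r i + δ i - 1 := by
      intro i
      simp only [hmB]
      split
      · exact le_refl _
      · split
        · rename_i h1 h2
          have hri : r i = r ⟨ℓ, hℓg⟩ := by congr 1; exact Fin.ext h2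
          have := hδ i
          omega
        · exact Nat.zero_le _
    set B : ∀ i : Fin g, Finset (Fin (r i + δ i - 1)) :=
      fun i => Finset.univ.filter (fun j => (j : ℕ) < mB i) with hB
    have hcardB : ∀ i, (B i).card = mB i := by
      intro i
      rw [hB]
      simp only
      rw [card_filter_val_lt]
      exact min_eq_left (hmB_le i)
    have sumsplit : ∀ (f1 : Fin g → ℕ) (c : ℕ),
        ∑ i : Fin g, (if (i : ℕ) < ℓ then f1 i else if (i : ℕ) = ℓ then c else 0)
          = (∑ i ∈ Finset.univ.filter (fun i : Fin g => (i : ℕ) < ℓ), f1 i) + c := by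
      intro f1 c
      rw [← Finset.sum_filter_add_sum_filter_not Finset.univ (fun i : Fin g => (i : ℕ) < ℓ)]
      congr 1
      · exact Finset.sum_congr rfl fun i hi => if_pos (Finset.mem_filter.mp hi).2
      · have hcongr : ∀ i ∈ Finset.univ.filter (fun i : Fin g => ¬ (i : ℕ) < ℓ),
            (if (i : ℕ) < ℓ then f1 i else if (i : ℕ) = ℓ then c else 0)
              = if i = (⟨ℓ, hℓg⟩ : Fin g) then c else 0 := by
          intro i hi
          rw [if_neg (Finset.mem_filter.mp hi).2]
          by_cases h : (i : ℕ) = ℓ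
          · rw [if_pos h, if_pos (Fin.ext h)]
          · rw [if_neg h, if_neg (fun hc => h (by rw [hc]))]
        rw [Finset.sum_congr rfl hcongr, Finset.sum_ite_eq' _ (⟨ℓ, hℓg⟩ : Fin g) (fun _ => c),
          if_pos (by simp)]
    have hBsum : ∑ i, (B i).card = (k - 1) + Δ := by
      have h1 : ∑ i, (B i).card = ∑ i, mB i := Finset.sum_congr rfl fun i _ => hcardB i
      have h2 : ∑ i, mB i
          = (∑ i ∈ Finset.univ.filter (fun i : Fin g => (i : ℕ) < ℓ), (r i + δ i - 1)) + m :=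
        sumsplit _ m
      have h3 : ∑ i ∈ Finset.univ.filter (fun i : Fin g => (i : ℕ) < ℓ), (r i + δ i - 1)
          = Rℓ + Δ := by
        rw [hRℓdef, hΔdef, ← Finset.sum_add_distrib]
        exact Finset.sum_congr rfl fun i _ => by have := hδ i; omega
      omega
    have hBmin : ∑ i, min (r i) ((B i).card) = k - 1 := by
      have h1 : ∀ i, min (r i) ((B i).card)
          = (if (i : ℕ) < ℓ then r i else if (i : ℕ) = ℓ then m else 0) := by
        intro i
        rw [hcardB i]
        simp only [hmB]
        split
        · exact min_eq_left (by have := hδ i; omega)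
        · split
          · rename_i h1 h2
            have : i = ⟨ℓ, hℓg⟩ := Fin.ext h2
            subst this
            exact min_eq_right hmr
          · simp
      rw [Finset.sum_congr rfl fun i _ => h1 i, sumsplit]
      omega
    -- shrink
    have hMle : N - e ≤ (k - 1) + Δ := by omega
    obtain ⟨R, hsub, hRcard⟩ := shrink ((k - 1) + Δ - (N - e)) B (N - e) (by omega)
    have hk_le := hprop R hRcard
    rw [hmds_sum] at hk_le
    have hle2 : ∑ i, min (r i) ((R i).card) ≤ ∑ i, min (r i) ((B i).card) :=
      Finset.sum_le_sum fun i _ =>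
        min_le_min (le_refl _) (Finset.card_le_card (hsub i))
    omega
  exact le_antisymm (csSup_le ⟨estar, hmem⟩ hub) (le_csSup ⟨estar, hub⟩ hmem)
end

section
/- Let q = q_0^s for a prime power q_0 and integer s ≥ 1, and fix a sum-rank length partition N = Σ r_i. For any code C ⊆ F_{q^m}^N, the subextension subcode C ∩ F_{q_0^m}^N has minimum sum-rank distance over F_{q_0} at least the minimum sum-rank distance of C over F_q (assuming the subextension subcode has at least two elements). -/
open Module

theorem finrank_span_le_finrank_span_of_tower_s18 {K0 K M : Type*} [Field K0] [Field K]
    [AddCommGroup M] [Module K0 K] [Module K M] [Module K0 M] [IsScalarTower K0 K M]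
    {ι : Type*} [Finite ι] (f : ι → M) :
    finrank K (Submodule.span K (Set.range f)) ≤
      finrank K0 (Submodule.span K0 (Set.range f)) := by
  set V := Submodule.span K0 (Set.range f)
  have : FiniteDimensional K0 V := FiniteDimensional.span_of_finite K0 (Set.finite_range f)
  let b := finBasis K0 V
  have hV : Submodule.span K0 (Set.range (V.subtype ∘ b)) = V := by
    rw [Set.range_comp, ← Submodule.map_span, b.span_eq, Submodule.map_top,
      Submodule.range_subtype]
  calc finrank K (Submodule.span K (Set.range f))
      = finrank K (Submodule.span K (Set.range (V.subtype ∘ b))) := by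
        rw [← Submodule.span_span_of_tower K0 K (Set.range f),
          ← Submodule.span_span_of_tower K0 K (Set.range _), hV]
    _ ≤ Fintype.card (Fin (finrank K0 V)) := finrank_range_le_card _
    _ = finrank K0 V := Fintype.card_fin _

section SumRank

variable {K0 K L : Type*} [Field K0] [Field K] [Field L]
  [Algebra K0 K] [Algebra K L] [Algebra K0 L] [IsScalarTower K0 K L]
  {g : ℕ} {r : Fin g → ℕ}

theorem srWeight_le_srWeight_of_tower (c : ∀ i : Fin g, Fin (r i) → L) :
    srWeight K c ≤ srWeight K0 c :=
  Finset.sum_le_sum fun i _ => finrank_span_le_finrank_span_of_tower_s18 (c i)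

theorem srMinDist_le_srWeight {C : Set (∀ i : Fin g, Fin (r i) → L)} {c d}
    (hc : c ∈ C) (hd : d ∈ C) (hcd : c ≠ d) : srMinDist K C ≤ srWeight K (c - d) :=
  Nat.sInf_le ⟨c, hc, d, hd, hcd, rfl⟩

theorem exists_srWeight_eq_srMinDist {C : Set (∀ i : Fin g, Fin (r i) → L)}
    (hC : C.Nontrivial) : ∃ c ∈ C, ∃ d ∈ C, c ≠ d ∧ srWeight K (c - d) = srMinDist K C := by
  obtain ⟨c, hc, d, hd, hcd⟩ := hC
  obtain ⟨c', hc', d', hd', hcd', hmin⟩ :=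
    Nat.sInf_mem (⟨_, c, hc, d, hd, hcd, rfl⟩ :
      {w | ∃ c ∈ C, ∃ d ∈ C, c ≠ d ∧ w = srWeight K (c - d)}.Nonempty)
  exact ⟨c', hc', d', hd', hcd', hmin.symm⟩

theorem srMinDist_le_srMinDist_of_subset_of_tower {C C' : Set (∀ i : Fin g, Fin (r i) → L)}
    (hC' : C'.Nontrivial) (hsub : C' ⊆ C) : srMinDist K C ≤ srMinDist K0 C' := by
  obtain ⟨c, hc, d, hd, hcd, hmin⟩ := exists_srWeight_eq_srMinDist (K := K0) hC'
  calc srMinDist K C ≤ srWeight K (c - d) := srMinDist_le_srWeight (hsub hc) (hsub hd) hcd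
    _ ≤ srWeight K0 (c - d) := srWeight_le_srWeight_of_tower _
    _ = srMinDist K0 C' := hmin

end SumRank

theorem subextension_subcode_distance_general
    {K0 K L : Type*} [Field K0] [Field K] [Field L]
    [Algebra K0 K] [Algebra K L] [Algebra K0 L] [IsScalarTower K0 K L]
    (L0 : Subfield L)
    {g : ℕ} {r : Fin g → ℕ} (C : Set (∀ i : Fin g, Fin (r i) → L))
    (hC0 : ({c ∈ C | ∀ i j, c i j ∈ L0} : Set (∀ i : Fin g, Fin (r i) → L)).Nontrivial) :
    srMinDist K C ≤ srMinDist K0 {c ∈ C | ∀ i j, c i j ∈ L0} :=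
  srMinDist_le_srMinDist_of_subset_of_tower hC0 fun _ hc => hc.1

/-- let `F_{q_0} ⊆ F_q ⊆ F_{q^m}` with `q = q_0^s`, and let
`F_{q_0^m} ⊆ F_{q^m}` be the subfield with `q_0^m` elements.  For any code
`C ⊆ F_{q^m}^N`, the subextension subcode `C ∩ F_{q_0^m}^N` has minimum sum-rank
distance over `F_{q_0}` at least the minimum sum-rank distance of `C` over `F_q`. -/
theorem subextension_subcode_distance
    {K0 K L : Type*} [Field K0] [Fintype K0] [Field K] [Fintype K] [Field L] [Fintype L]
    [Algebra K0 K] [Algebra K L] [Algebra K0 L] [IsScalarTower K0 K L]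
    {s m : ℕ} (hs : 1 ≤ s) (hq : Fintype.card K = Fintype.card K0 ^ s)
    (hm : Module.finrank K L = m)
    (L0 : Subfield L) (hL0 : ∀ x : L, x ∈ L0 ↔ x ^ (Fintype.card K0) ^ m = x)
    {g : ℕ} {r : Fin g → ℕ} (C : Set (∀ i : Fin g, Fin (r i) → L))
    (hC0 : ({c ∈ C | ∀ i j, c i j ∈ L0} : Set (∀ i : Fin g, Fin (r i) → L)).Nontrivial) :
    srMinDist K C ≤ srMinDist K0 {c ∈ C | ∀ i j, c i j ∈ L0} :=
  subextension_subcode_distance_general L0 C hC0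
end

section
/- Let q = q_0^s and let C_Alt = (C^⊥)_{q_0,m} ⊆ F_{q_0^m}^N be the sum-rank alternant code obtained as the subextension subcode of the dual of a (δ*−1)-dimensional linearized Reed-Solomon code C ⊆ F_{q^m}^N. Then d_SR^{q_0}(C_Alt) ≥ δ* and dim_{F_{q_0^m}}(C_Alt) ≥ N − s(δ* − 1). -/
/-- The linearized Reed–Solomon code of dimension `k`, with basis vectors `β` of
`F_{q^m}` over `F_q` and primitive element `γ`: the code spanned by the rows of
`D = (D_1 | … | D_g)`, where the `(s,t)` entry of the block `D_i` is
`𝒟_{γ^i}^s(β_t) = β_t^{q^s} · N_s(γ^i)`, with `N_s(a) = ∏_{j<s} a^{q^j}`. -/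
def linRS {Fq F : Type*} [Field Fq] [Fintype Fq] [Field F] [Algebra Fq F]
    {m : ℕ} (β : Module.Basis (Fin m) Fq F) (γ : F) (k : ℕ)
    {g : ℕ} (r : Fin g → ℕ) (hr : ∀ i, r i ≤ m) :
    Set (∀ i : Fin g, Fin (r i) → F) :=
  {c | ∃ f : Fin k → F, ∀ (i : Fin g) (t : Fin (r i)), c i t =
    ∑ s : Fin k, f s *
      ((β (Fin.castLE (hr i) t)) ^ (Fintype.card Fq) ^ (s : ℕ) *
        ∏ j ∈ Finset.range (s : ℕ), (γ ^ (i : ℕ)) ^ (Fintype.card Fq) ^ j)}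

set_option linter.unusedSectionVars false
set_option maxHeartbeats 1600000
open Finset



section Frob

variable (K L : Type*) [Field K] [Fintype K] [Field L] [Fintype L] [Algebra K L]

lemma frob_add (s : ℕ) (x y : L) :
    (x + y) ^ (Fintype.card K) ^ s = x ^ (Fintype.card K) ^ s + y ^ (Fintype.card K) ^ s := by
  set p := ringChar K with hp
  haveI : Fact p.Prime := ⟨CharP.char_is_prime K p⟩
  haveI : CharP L p := charP_of_injective_algebraMap (algebraMap K L).injective p
  obtain ⟨n, -, hcard⟩ := FiniteField.card K p
  rw [hcard, ← pow_mul, add_pow_char_pow]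

lemma frob_sub (s : ℕ) (x y : L) :
    (x - y) ^ (Fintype.card K) ^ s = x ^ (Fintype.card K) ^ s - y ^ (Fintype.card K) ^ s := by
  set p := ringChar K with hp
  haveI : Fact p.Prime := ⟨CharP.char_is_prime K p⟩
  haveI : CharP L p := charP_of_injective_algebraMap (algebraMap K L).injective p
  obtain ⟨n, -, hcard⟩ := FiniteField.card K p
  rw [hcard, ← pow_mul, sub_pow_char_pow]

lemma frob_smul (s : ℕ) (c : K) (x : L) :
    (c • x) ^ (Fintype.card K) ^ s = c • (x ^ (Fintype.card K) ^ s) := by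
  rw [Algebra.smul_def, Algebra.smul_def, mul_pow, ← map_pow, FiniteField.pow_card_pow]

/-- Frobenius power as a `K`-linear map on `L`. -/
noncomputable def frobPow (s : ℕ) : L →ₗ[K] L where
  toFun x := x ^ (Fintype.card K) ^ s
  map_add' x y := frob_add K L s x y
  map_smul' c x := frob_smul K L s c x

lemma frobPow_apply (s : ℕ) (x : L) : frobPow K L s x = x ^ (Fintype.card K) ^ s := rfl

lemma eq_algebraMap_of_pow_card {x : L} (hx : x ^ Fintype.card K = x) :
    ∃ c : K, algebraMap K L c = x := by
  classical
  by_contra hcon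
  push_neg at hcon
  have hq2 : 1 < Fintype.card K := Fintype.one_lt_card
  set P : Polynomial L := Polynomial.X ^ Fintype.card K - Polynomial.X with hP
  have hdeg : P.natDegree = Fintype.card K := by
    rw [hP]
    rw [Polynomial.natDegree_sub_eq_left_of_natDegree_lt] <;>
      simp [Polynomial.natDegree_X_pow, hq2]
  have hP0 : P ≠ 0 := fun h => by simp [h] at hdeg; omega
  have hroot : ∀ z : L, z ^ Fintype.card K = z → z ∈ P.roots.toFinset := by
    intro z hz
    rw [Multiset.mem_toFinset, Polynomial.mem_roots hP0]
    simp [hP, Polynomial.IsRoot, hz]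
  set T : Finset L := insert x (Finset.image (algebraMap K L) Finset.univ) with hT
  have hsub : T ⊆ P.roots.toFinset := by
    intro z hz
    rw [hT, Finset.mem_insert] at hz
    rcases hz with rfl | hz
    · exact hroot z hx
    · obtain ⟨c, -, rfl⟩ := Finset.mem_image.mp hz
      exact hroot _ (by rw [← map_pow, FiniteField.pow_card])
  have hcardT : T.card = Fintype.card K + 1 := by
    rw [hT, Finset.card_insert_of_notMem, Finset.card_image_of_injective _
      (algebraMap K L).injective, Finset.card_univ]
    intro hmem
    obtain ⟨c, -, hc⟩ := Finset.mem_image.mp hmem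
    exact hcon c hc
  have := Finset.card_le_card hsub
  have h2 := Multiset.toFinset_card_le P.roots
  have h3 := P.card_roots' 
  omega

end Frob


section Op
variable (K : Type*) {L : Type*} [Field K] [Fintype K] [Field L] [Fintype L] [Algebra K L]

def Nrm (q s : ℕ) (a : L) : L := ∏ j ∈ Finset.range s, a ^ q ^ j

lemma Nrm_succ (q s : ℕ) (a : L) : Nrm q (s+1) a = Nrm q s a * a ^ q ^ s :=
  Finset.prod_range_succ _ _

lemma Nrm_zero (q : ℕ) (a : L) : Nrm q 0 a = 1 := Finset.prod_range_zero _

noncomputable def TOp (a : L) (f : ℕ → L) (n : ℕ) : L →ₗ[K] L :=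
  ∑ s ∈ Finset.range n, (f s * Nrm (Fintype.card K) s a) • frobPow K L s

lemma TOp_apply (a : L) (f : ℕ → L) (n : ℕ) (x : L) :
    TOp K a f n x
      = ∑ s ∈ Finset.range n, f s * x ^ (Fintype.card K) ^ s * Nrm (Fintype.card K) s a := by
  simp only [TOp, LinearMap.coe_sum, Finset.sum_apply, LinearMap.smul_apply, frobPow_apply,
    smul_eq_mul]
  exact Finset.sum_congr rfl fun s _ => by ring

variable {K}

lemma finrank_comap_le (φ : L →ₗ[K] L) (W : Submodule K L) :
    Module.finrank K (W.comap φ)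
      ≤ Module.finrank K (LinearMap.ker φ) + Module.finrank K W := by
  haveI : Module.Finite K L := Module.finite_iff_finite.mpr inferInstance
  set ψ : W.comap φ →ₗ[K] W := φ.restrict (fun x hx => hx) with hψ
  have h1 := LinearMap.finrank_range_add_finrank_ker ψ
  have h2 : Module.finrank K (LinearMap.range ψ) ≤ Module.finrank K W :=
    Submodule.finrank_le _
  have h3 : Module.finrank K (LinearMap.ker ψ) ≤ Module.finrank K (LinearMap.ker φ) := by
    rw [← Submodule.finrank_map_subtype_eq (W.comap φ) (LinearMap.ker ψ)]
    apply Submodule.finrank_mono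
    rintro x hx
    simp only [Submodule.mem_map] at hx
    obtain ⟨y, hy, rfl⟩ := hx
    have h4 : ψ y = 0 := hy
    exact congrArg Subtype.val h4
  omega

lemma ker_sum_le {G : ℕ} (a : Fin G → L) (ha0 : ∀ i, a i ≠ 0)
    (ha : ∀ i j, i ≠ j → ∀ b z : L, b ≠ 0 → z ≠ 0 →
      z ^ Fintype.card K * a i * b ≠ b ^ Fintype.card K * a j * z) :
    ∀ (n : ℕ) (f : ℕ → L), (∀ s, n < s → f s = 0) → f ≠ 0 →
      ∑ i, Module.finrank K (LinearMap.ker (TOp K (a i) f (n+1))) ≤ n := by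
  haveI : Module.Finite K L := Module.finite_iff_finite.mpr inferInstance
  intro n
  induction n with
  | zero =>
    intro f hsupp hf0
    have hf : f 0 ≠ 0 := by
      intro h
      apply hf0; funext s
      rcases Nat.eq_zero_or_pos s with rfl | hs
      · exact h
      · exact hsupp s hs
    have hker : ∀ i, LinearMap.ker (TOp K (a i) f 1) = ⊥ := by
      intro i
      rw [LinearMap.ker_eq_bot']
      intro x hx
      rw [TOp_apply] at hx
      simp only [Finset.sum_range_one, pow_zero, pow_one, Nrm_zero, mul_one] at hx
      rcases mul_eq_zero.mp hx with h | h
      · exact absurd h hf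
      · exact h
    refine le_of_eq ?_
    rw [Finset.sum_eq_zero]
    intro i _
    rw [hker i, finrank_bot]
  | succ n ih =>
    intro f hsupp hf0
    by_cases hall : ∀ i, LinearMap.ker (TOp K (a i) f (n+1+1)) = ⊥
    · refine le_trans (le_of_eq (Finset.sum_eq_zero fun i _ => by rw [hall i, finrank_bot]))
        (Nat.zero_le _)
    push_neg at hall
    obtain ⟨i0, hi0⟩ := hall
    obtain ⟨b, hbker', hb0⟩ := (Submodule.ne_bot_iff _).mp hi0
    have hbker : TOp K (a i0) f (n+2) b = 0 := hbker'
    set c : L := b ^ Fintype.card K * a i0 * b⁻¹ with hcdef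
    have hcb : c * b = b ^ Fintype.card K * a i0 := by
      rw [hcdef]; field_simp
    set g : ℕ → L := fun s =>
      ∑ t ∈ Finset.Ico (s+1) (n+2), f t * ∏ j ∈ Finset.Ico (s+1) t, c ^ (Fintype.card K) ^ j
      with hgdef
    have hgsupp : ∀ s, n < s → g s = 0 := by
      intro s hs
      simp only [hgdef]
      rw [Finset.Ico_eq_empty (by omega), Finset.sum_empty]
    have hrec : ∀ s, g s = f (s+1) + g (s+1) * c ^ (Fintype.card K) ^ (s+1) := by
      intro s
      by_cases hs : s + 1 < n + 2
      · simp only [hgdef]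
        rw [Finset.sum_eq_sum_Ico_succ_bot hs]
        rw [Finset.Ico_self, Finset.prod_empty, mul_one]
        congr 1
        rw [Finset.sum_mul]
        apply Finset.sum_congr rfl
        intro t ht
        rw [Finset.mem_Ico] at ht
        rw [Finset.prod_eq_prod_Ico_succ_bot (by omega : s+1 < t)]
        ring
      · rw [hgsupp s (by omega), hgsupp (s+1) (by omega), hsupp (s+1) (by omega)]
        ring
    have hkey : ∀ (aa x : L), TOp K aa f (n+2) x
        = TOp K aa g (n+2) (x ^ Fintype.card K * aa - c * x) + (f 0 + g 0 * c) * x := by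
      intro aa x
      have hpow : ∀ s : ℕ, (x ^ Fintype.card K * aa - c * x) ^ (Fintype.card K) ^ s
          = x ^ (Fintype.card K) ^ (s+1) * aa ^ (Fintype.card K) ^ s
            - c ^ (Fintype.card K) ^ s * x ^ (Fintype.card K) ^ s := by
        intro s
        rw [frob_sub K L s, mul_pow, mul_pow, ← pow_mul, ← pow_succ']
      rw [TOp_apply, TOp_apply]
      have e1 : ∀ s ∈ Finset.range (n+2),
          g s * (x ^ Fintype.card K * aa - c * x) ^ (Fintype.card K) ^ s
              * Nrm (Fintype.card K) s aa
            = g s * x ^ (Fintype.card K) ^ (s+1) * Nrm (Fintype.card K) (s+1) aa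
              - g s * c ^ (Fintype.card K) ^ s * x ^ (Fintype.card K) ^ s
                  * Nrm (Fintype.card K) s aa := by
        intro s _
        rw [hpow, Nrm_succ]; ring
      rw [Finset.sum_congr rfl e1, Finset.sum_sub_distrib]
      rw [Finset.sum_range_succ
        (fun s => g s * x ^ (Fintype.card K) ^ (s+1) * Nrm (Fintype.card K) (s+1) aa) (n+1)]
      rw [hgsupp (n+1) (by omega)]
      rw [Finset.sum_range_succ'
        (fun s => g s * c ^ (Fintype.card K) ^ s * x ^ (Fintype.card K) ^ s
          * Nrm (Fintype.card K) s aa) (n+1)]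
      rw [Finset.sum_range_succ'
        (fun s => f s * x ^ (Fintype.card K) ^ s * Nrm (Fintype.card K) s aa) (n+1)]
      have e2 : ∀ s ∈ Finset.range (n+1),
          f (s+1) * x ^ (Fintype.card K) ^ (s+1) * Nrm (Fintype.card K) (s+1) aa
            = g s * x ^ (Fintype.card K) ^ (s+1) * Nrm (Fintype.card K) (s+1) aa
              - g (s+1) * c ^ (Fintype.card K) ^ (s+1) * x ^ (Fintype.card K) ^ (s+1)
                  * Nrm (Fintype.card K) (s+1) aa := by
        intro s _
        have hfs : f (s+1) = g s - g (s+1) * c ^ (Fintype.card K) ^ (s+1) := by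
          rw [hrec s]; ring
        rw [hfs]; ring
      rw [Finset.sum_congr rfl e2, Finset.sum_sub_distrib]
      simp only [pow_zero, pow_one, Nrm_zero, mul_one]
      ring
    have hbE : b ^ Fintype.card K * a i0 - c * b = 0 := by rw [hcb, sub_self]
    have hrho : f 0 + g 0 * c = 0 := by
      have hk := hkey (a i0) b
      rw [hbker, hbE, map_zero, zero_add] at hk
      rcases mul_eq_zero.mp hk.symm with h | h
      · exact h
      · exact absurd h hb0
    have hgne : g ≠ 0 := by
      intro h0
      apply hf0
      have hg0 : ∀ s, g s = 0 := fun s => congrFun h0 s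
      funext s
      cases s with
      | zero =>
        have h := hrho
        rw [hg0 0, zero_mul, add_zero] at h
        exact h
      | succ s =>
        have h := hrec s
        rw [hg0 s, hg0 (s+1), zero_mul, add_zero] at h
        exact h.symm
    have IH := ih g hgsupp hgne
    have hTopg2 : ∀ aa : L, TOp K aa g (n+2) = TOp K aa g (n+1) := by
      intro aa
      rw [TOp, TOp, Finset.sum_range_succ, hgsupp (n+1) (by omega), zero_mul, zero_smul,
        add_zero]
    have hEx : ∀ (i : Fin G) (x : L),
        (a i • frobPow K L 1 - c • (LinearMap.id : L →ₗ[K] L)) x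
          = x ^ Fintype.card K * a i - c * x := by
      intro i x
      simp only [LinearMap.sub_apply, LinearMap.smul_apply, frobPow_apply, LinearMap.id_apply,
        smul_eq_mul, pow_one]
      ring
    have hcomp : ∀ i, LinearMap.ker (TOp K (a i) f (n+2))
        = Submodule.comap (a i • frobPow K L 1 - c • (LinearMap.id : L →ₗ[K] L))
            (LinearMap.ker (TOp K (a i) g (n+1))) := by
      intro i
      rw [← LinearMap.ker_comp]
      congr 1
      apply LinearMap.ext
      intro x
      rw [hkey (a i) x, hrho, zero_mul, add_zero, LinearMap.comp_apply, hEx, hTopg2]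
    have hbound : ∀ i, Module.finrank K (LinearMap.ker (TOp K (a i) f (n+2)))
        ≤ Module.finrank K (LinearMap.ker (TOp K (a i) g (n+1)))
          + (if i = i0 then 1 else 0) := by
      intro i
      rw [hcomp i]
      have h := finrank_comap_le (a i • frobPow K L 1 - c • (LinearMap.id : L →ₗ[K] L))
        (LinearMap.ker (TOp K (a i) g (n+1)))
      by_cases hii : i = i0
      · subst hii
        rw [if_pos rfl]
        have hker1 : Module.finrank K
            (LinearMap.ker (a i • frobPow K L 1 - c • (LinearMap.id : L →ₗ[K] L))) ≤ 1 := by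
          have hsub : LinearMap.ker (a i • frobPow K L 1 - c • (LinearMap.id : L →ₗ[K] L))
              ≤ Submodule.span K {b} := by
            intro z hz
            rw [LinearMap.mem_ker, hEx, sub_eq_zero] at hz
            by_cases hz0 : z = 0
            · simp [hz0]
            · have hb' : b ^ Fintype.card K * a i = c * b := hcb.symm
              have key : z ^ Fintype.card K * b = z * b ^ Fintype.card K := by
                apply mul_right_cancel₀ (ha0 i)
                have h3 : z ^ Fintype.card K * a i * b = b ^ Fintype.card K * a i * z := by
                  rw [hz, hb']; ring
                linear_combination h3
              have hw : (z * b⁻¹) ^ Fintype.card K = z * b⁻¹ := by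
                rw [mul_pow, inv_pow]
                field_simp
                linear_combination key
              obtain ⟨μ, hμ⟩ := eq_algebraMap_of_pow_card K L hw
              rw [Submodule.mem_span_singleton]
              exact ⟨μ, by rw [Algebra.smul_def, hμ]; field_simp⟩
          exact le_trans (Submodule.finrank_mono hsub)
            (le_of_eq (finrank_span_singleton hb0))
        omega
      · rw [if_neg hii]
        have hkerE : LinearMap.ker (a i • frobPow K L 1 - c • (LinearMap.id : L →ₗ[K] L))
            = ⊥ := by
          rw [LinearMap.ker_eq_bot']
          intro z hz
          by_contra hz0
          rw [hEx, sub_eq_zero] at hz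
          apply ha i i0 hii b z hb0 hz0
          rw [hz, ← hcb]; ring
        rw [hkerE, finrank_bot] at h
        simpa using h
    calc ∑ i, Module.finrank K (LinearMap.ker (TOp K (a i) f (n+1+1)))
        ≤ ∑ i, (Module.finrank K (LinearMap.ker (TOp K (a i) g (n+1)))
            + (if i = i0 then 1 else 0)) := Finset.sum_le_sum fun i _ => hbound i
      _ = (∑ i, Module.finrank K (LinearMap.ker (TOp K (a i) g (n+1))))
            + ∑ i : Fin G, (if i = i0 then 1 else 0) := Finset.sum_add_distrib
      _ ≤ n + 1 := by
          rw [Finset.sum_ite_eq' Finset.univ i0 (fun _ => 1)]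
          simp only [Finset.mem_univ, if_pos]
          omega
end Op

section Conj
variable {K L : Type*} [Field K] [Fintype K] [Field L] [Fintype L] [Algebra K L]

lemma gamma_nonconj {γ : L} (hγ : orderOf γ = Fintype.card L - 1)
    {m : ℕ} (hcard : Fintype.card L = Fintype.card K ^ m)
    {G : ℕ} (hG : G ≤ Fintype.card K - 1) :
    ∀ i j : Fin G, i ≠ j → ∀ b z : L, b ≠ 0 → z ≠ 0 →
      z ^ Fintype.card K * γ ^ (i : ℕ) * b ≠ b ^ Fintype.card K * γ ^ (j : ℕ) * z := by
  have hL2 : 1 < Fintype.card L := Fintype.one_lt_card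
  have hγ0 : γ ≠ 0 := by
    intro h
    rw [h] at hγ
    have : orderOf (0 : L) = 0 := by
      rw [orderOf_eq_zero_iff']
      intro n hn h0
      rw [zero_pow (by omega)] at h0
      exact one_ne_zero h0.symm
    omega
  -- main sublemma
  have main : ∀ (d : ℕ), 0 < d → d < Fintype.card K - 1 → ∀ w : L, w ≠ 0 →
      γ ^ d ≠ w ^ (Fintype.card K - 1) := by
    intro d hd0 hd w hw heqd
    classical
    set γu : Lˣ := Units.mk0 γ hγ0 with hγu
    set wu : Lˣ := Units.mk0 w hw with hwu
    have hordu : orderOf γu = Fintype.card L - 1 := by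
      rw [← orderOf_units]; exact hγ
    have htop : Subgroup.zpowers γu = ⊤ := by
      apply Subgroup.eq_top_of_card_eq
      rw [Nat.card_zpowers, hordu, Nat.card_eq_fintype_card, Fintype.card_units]
    have hmem : wu ∈ Submonoid.powers γu := by
      rw [mem_powers_iff_mem_zpowers, htop]
      trivial
    obtain ⟨t, ht⟩ := hmem
    have ht' : γu ^ t = wu := ht
    have hval : γ ^ t = w := by
      have hv := congrArg (Units.val) ht'
      rw [Units.val_pow_eq_pow_val] at hv
      simpa [hγu, hwu] using hv
    have hequ : γu ^ d = γu ^ (t * (Fintype.card K - 1)) := by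
      apply Units.ext
      rw [Units.val_pow_eq_pow_val, Units.val_pow_eq_pow_val, pow_mul]
      simp only [hγu, Units.val_mk0]
      rw [hval, heqd]
    have hmod : d ≡ t * (Fintype.card K - 1) [MOD Fintype.card L - 1] := by
      rw [← hordu]
      exact pow_eq_pow_iff_modEq.mp hequ
    have hdvd : (Fintype.card K - 1) ∣ (Fintype.card L - 1) := by
      rw [hcard]
      have := Nat.sub_dvd_pow_sub_pow (Fintype.card K) 1 m
      simpa using this
    have hmod2 : d ≡ t * (Fintype.card K - 1) [MOD Fintype.card K - 1] :=
      hmod.of_dvd hdvd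
    have : d % (Fintype.card K - 1) = 0 := by
      have h0 : t * (Fintype.card K - 1) % (Fintype.card K - 1) = 0 :=
        Nat.mul_mod_left _ _
      unfold Nat.ModEq at hmod2
      omega
    have : (Fintype.card K - 1) ∣ d := Nat.dvd_of_mod_eq_zero this
    have := Nat.le_of_dvd hd0 this
    omega
  intro i j hij b z hb0 hz0 heq
  have hq1 : 1 < Fintype.card K := Fintype.one_lt_card
  -- derive γ ^ |i - j| = ((b or z)/other)^(q-1)
  rcases Nat.lt_or_ge (j : ℕ) (i : ℕ) with hlt | hge
  · apply main ((i : ℕ) - (j : ℕ)) (by omega) (by have := i.isLt; omega) (b * z⁻¹)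
      (mul_ne_zero hb0 (inv_ne_zero hz0))
    have hsplit : (i : ℕ) = ((i : ℕ) - (j : ℕ)) + (j : ℕ) := by omega
    rw [hsplit, pow_add] at heq
    have hgj : γ ^ (j : ℕ) ≠ 0 := pow_ne_zero _ hγ0
    have hcz : z ^ Fintype.card K * γ ^ ((i : ℕ) - (j : ℕ)) * b = b ^ Fintype.card K * z := by
      apply mul_right_cancel₀ hgj
      linear_combination heq
    have hqk : Fintype.card K = (Fintype.card K - 1) + 1 := by omega
    rw [hqk, pow_succ, pow_succ] at hcz
    rw [mul_pow, inv_pow]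
    rw [eq_mul_inv_iff_mul_eq₀ (pow_ne_zero _ hz0)]
    apply mul_right_cancel₀ (mul_ne_zero hb0 hz0)
    linear_combination hcz
  · have hlt : (i : ℕ) < (j : ℕ) := by
      rcases Nat.lt_or_ge (i : ℕ) (j : ℕ) with h | h
      · exact h
      · exfalso; exact hij (Fin.ext (by omega))
    apply main ((j : ℕ) - (i : ℕ)) (by omega) (by have := j.isLt; omega) (z * b⁻¹)
      (mul_ne_zero hz0 (inv_ne_zero hb0))
    have hsplit : (j : ℕ) = ((j : ℕ) - (i : ℕ)) + (i : ℕ) := by omega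
    rw [hsplit, pow_add] at heq
    have hgi : γ ^ (i : ℕ) ≠ 0 := pow_ne_zero _ hγ0
    have hcz : z ^ Fintype.card K * b = b ^ Fintype.card K * γ ^ ((j : ℕ) - (i : ℕ)) * z := by
      apply mul_right_cancel₀ hgi
      linear_combination heq
    have hqk : Fintype.card K = (Fintype.card K - 1) + 1 := by omega
    rw [hqk, pow_succ, pow_succ] at hcz
    rw [mul_pow, inv_pow]
    rw [eq_mul_inv_iff_mul_eq₀ (pow_ne_zero _ hb0)]
    apply mul_right_cancel₀ (mul_ne_zero hz0 hb0)
    linear_combination -hcz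
end Conj

section Vanish
variable {K L : Type*} [Field K] [Fintype K] [Field L] [Fintype L] [Algebra K L]

lemma vanish_lemma {G : ℕ} (a : Fin G → L) (ha0 : ∀ i, a i ≠ 0)
    (ha : ∀ i j, i ≠ j → ∀ b z : L, b ≠ 0 → z ≠ 0 →
      z ^ Fintype.card K * a i * b ≠ b ^ Fintype.card K * a j * z)
    (k : ℕ) (w : Fin G → ℕ) (hwk : ∑ i, w i ≤ k)
    (bv : ∀ i, Fin (w i) → L) (hbli : ∀ i, LinearIndependent K (bv i))
    (y : ∀ i, Fin (w i) → L)
    (heq : ∀ s : ℕ, s < k → ∑ i, ∑ u, y i u * (bv i u) ^ (Fintype.card K) ^ s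
      * Nrm (Fintype.card K) s (a i) = 0) :
    ∀ i u, y i u = 0 := by
  classical
  haveI : Module.Finite K L := Module.finite_iff_finite.mpr inferInstance
  set w0 := ∑ i, w i with hw0
  rcases Nat.eq_zero_or_pos w0 with hz | hpos
  · intro i u
    have hwi : w i = 0 := by
      by_contra h
      have h1 : 0 < w i := Nat.pos_of_ne_zero h
      have hle : w i ≤ w0 := Finset.single_le_sum (f := w) (fun _ _ => Nat.zero_le _)
        (Finset.mem_univ i)
      omega
    exact absurd u.isLt (by omega)
  · have hJ : Fintype.card (Σ i : Fin G, Fin (w i)) = w0 := by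
      simp [Fintype.card_sigma]
      exact hw0.symm
    set e : (Σ i : Fin G, Fin (w i)) ≃ Fin w0 := Fintype.equivFinOfCardEq hJ with he
    set M : Matrix (Fin w0) (Fin w0) L := fun s jj =>
      (bv (e.symm jj).1 (e.symm jj).2) ^ (Fintype.card K) ^ (s : ℕ)
        * Nrm (Fintype.card K) (s : ℕ) (a (e.symm jj).1) with hM
    have hdet : M.det ≠ 0 := by
      have hT : ¬ ∃ v, v ≠ 0 ∧ M.transpose.mulVec v = 0 := by
        rintro ⟨v, hv0, hvm⟩
        set f : ℕ → L := fun s => if h : s < w0 then v ⟨s, h⟩ else 0 with hf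
        have hfsupp : ∀ s, w0 - 1 < s → f s = 0 := by
          intro s hs
          simp only [hf]
          rw [dif_neg (by omega)]
        have hfne : f ≠ 0 := by
          intro h0
          apply hv0
          funext s
          have hcf := congrFun h0 (s : ℕ)
          simpa [hf, dif_pos s.isLt] using hcf
        have hker : ∀ i, Module.finrank K (Submodule.span K (Set.range (bv i)))
            ≤ Module.finrank K (LinearMap.ker (TOp K (a i) f w0)) := by
          intro i
          apply Submodule.finrank_mono
          rw [Submodule.span_le]
          rintro x ⟨u, rfl⟩
          rw [SetLike.mem_coe, LinearMap.mem_ker, TOp_apply, Finset.sum_range]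
          have hcomp := congrFun hvm (e ⟨i, u⟩)
          rw [Matrix.mulVec, Pi.zero_apply] at hcomp
          rw [← hcomp, dotProduct]
          apply Finset.sum_congr rfl
          intro ss _
          have hMe : M ss (e ⟨i, u⟩)
              = bv i u ^ (Fintype.card K) ^ (ss : ℕ)
                * Nrm (Fintype.card K) (ss : ℕ) (a i) := by
            show bv (e.symm (e ⟨i, u⟩)).1 (e.symm (e ⟨i, u⟩)).2 ^ (Fintype.card K) ^ (ss : ℕ)
                * Nrm (Fintype.card K) (ss : ℕ) (a (e.symm (e ⟨i, u⟩)).1) = _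
            rw [Equiv.symm_apply_apply]
          rw [Matrix.transpose_apply, hMe]
          simp only [hf, dif_pos ss.isLt, Fin.eta]
          ring
        have hsum := ker_sum_le a ha0 ha (w0 - 1) f hfsupp hfne
        have hw0' : w0 - 1 + 1 = w0 := by omega
        rw [hw0'] at hsum
        have hge : ∀ i, w i ≤ Module.finrank K (LinearMap.ker (TOp K (a i) f w0)) := by
          intro i
          refine le_trans (le_of_eq ?_) (hker i)
          rw [finrank_span_eq_card (hbli i), Fintype.card_fin]
        have hcontra : w0 ≤ w0 - 1 :=
          le_trans (le_trans (le_of_eq hw0) (Finset.sum_le_sum fun i _ => hge i)) hsum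
        omega
      intro h0
      exact hT (Matrix.exists_mulVec_eq_zero_iff.mpr
        (by rw [Matrix.det_transpose]; exact h0))
    set vy : Fin w0 → L := fun jj => y (e.symm jj).1 (e.symm jj).2 with hvy
    have hmv : M.mulVec vy = 0 := by
      funext ss
      rw [Matrix.mulVec, Pi.zero_apply, dotProduct]
      have hsum := heq (ss : ℕ) (lt_of_lt_of_le ss.isLt hwk)
      calc ∑ jj : Fin w0, M ss jj * vy jj
          = ∑ j : (Σ i : Fin G, Fin (w i)), y j.1 j.2
              * bv j.1 j.2 ^ (Fintype.card K) ^ (ss : ℕ)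
              * Nrm (Fintype.card K) (ss : ℕ) (a j.1) := by
            rw [← Equiv.sum_comp e.symm (fun j : (Σ i : Fin G, Fin (w i)) => y j.1 j.2
              * bv j.1 j.2 ^ (Fintype.card K) ^ (ss : ℕ)
              * Nrm (Fintype.card K) (ss : ℕ) (a j.1))]
            apply Finset.sum_congr rfl
            intro jj _
            show (bv (e.symm jj).1 (e.symm jj).2 ^ (Fintype.card K) ^ (ss : ℕ)
                * Nrm (Fintype.card K) (ss : ℕ) (a (e.symm jj).1))
                * (y (e.symm jj).1 (e.symm jj).2) = _
            ring
        _ = 0 := by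
            rw [← Finset.univ_sigma_univ, Finset.sum_sigma]
            exact hsum
    have hvy0 : vy = 0 := by
      by_contra hne
      exact hdet (Matrix.exists_mulVec_eq_zero_iff.mp ⟨vy, hne, hmv⟩)
    intro i u
    have hc := congrFun hvy0 (e ⟨i, u⟩)
    have hc2 : y (e.symm (e ⟨i, u⟩)).1 (e.symm (e ⟨i, u⟩)).2 = 0 := hc
    rw [Equiv.symm_apply_apply] at hc2
    exact hc2
end Vanish

section Subf
variable (K0 K L : Type*) [Field K0] [Fintype K0] [Field K] [Fintype K] [Field L] [Fintype L]
  [Algebra K0 K] [Algebra K L] [Algebra K0 L] [IsScalarTower K0 K L]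

lemma finrank_span_le_span_subfield {ι : Type*} [Fintype ι] (v : ι → L) :
    Module.finrank K (Submodule.span K (Set.range v))
      ≤ Module.finrank K0 (Submodule.span K0 (Set.range v)) := by
  classical
  haveI : Module.Finite K0 L := Module.finite_iff_finite.mpr inferInstance
  haveI : Module.Finite K L := Module.finite_iff_finite.mpr inferInstance
  set W0 := Submodule.span K0 (Set.range v) with hW0
  set d := Module.finrank K0 W0 with hd
  set bb : Module.Basis (Fin d) K0 W0 := Module.finBasis K0 W0 with hbb
  set vv : Fin d → L := fun u => (bb u : L) with hvv
  have hle : Submodule.span K (Set.range v) ≤ Submodule.span K (Set.range vv) := by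
    rw [Submodule.span_le]
    rintro x ⟨t, rfl⟩
    have hx : v t ∈ W0 := Submodule.subset_span (Set.mem_range_self t)
    have hrep := Module.Basis.sum_repr bb ⟨v t, hx⟩
    have hval : v t = ∑ u, (bb.repr ⟨v t, hx⟩ u) • vv u := by
      have hcoe := congrArg (Subtype.val) hrep
      calc v t = ((⟨v t, hx⟩ : W0) : L) := rfl
        _ = ∑ u, (bb.repr ⟨v t, hx⟩ u) • vv u := by
            rw [← hcoe, Submodule.coe_sum]
            simp only [Submodule.coe_smul, hvv]
    rw [SetLike.mem_coe, hval]
    apply Submodule.sum_mem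
    intro u _
    rw [← IsScalarTower.algebraMap_smul K (bb.repr ⟨v t, hx⟩ u) (vv u)]
    exact Submodule.smul_mem _ _ (Submodule.subset_span (Set.mem_range_self u))
  have h2 : Module.finrank K (Submodule.span K (Set.range vv)) ≤ d := by
    refine le_trans (finrank_span_le_card (R := K) (Set.range vv)) ?_
    rw [Set.toFinset_range]
    exact le_trans Finset.card_image_le (by simp)
  exact le_trans (Submodule.finrank_mono hle) h2
end Subf

lemma card_subfield_eq {L : Type*} [Field L] [Fintype L] (dd ss : ℕ) (hd : 2 ≤ dd)
    (hs : 1 ≤ ss) (hcard : Fintype.card L = dd ^ ss) (L0 : Subfield L)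
    (hL0 : ∀ x : L, x ∈ L0 ↔ x ^ dd = x) :
    Nat.card L0 = dd := by
  classical
  set P : Polynomial L := Polynomial.X ^ dd - Polynomial.X with hP
  set R : Polynomial L := Polynomial.X ^ (dd ^ ss) - Polynomial.X with hR
  have hds : dd ≤ dd ^ ss := Nat.le_self_pow (by omega) dd
  have hdss : 2 ≤ dd ^ ss := le_trans hd hds
  have hPdeg : P.natDegree = dd := by
    rw [hP, Polynomial.natDegree_sub_eq_left_of_natDegree_lt] <;>
      simp [Polynomial.natDegree_X_pow]
    omega
  have hRdeg : R.natDegree = dd ^ ss := by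
    rw [hR, Polynomial.natDegree_sub_eq_left_of_natDegree_lt] <;>
      simp [Polynomial.natDegree_X_pow]
    omega
  have hP0 : P ≠ 0 := fun h => by rw [h] at hPdeg; simp at hPdeg; omega
  have hR0 : R ≠ 0 := fun h => by rw [h] at hRdeg; simp at hRdeg; omega
  have hfac : ∀ (e : ℕ), 1 ≤ e → (Polynomial.X : Polynomial L) ^ e - Polynomial.X
      = Polynomial.X * (Polynomial.X ^ (e - 1) - 1) := by
    intro e he
    have he' : e - 1 + 1 = e := by omega
    rw [mul_sub, mul_one, ← pow_succ', he']
  have hdvd : P ∣ R := by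
    obtain ⟨t, ht⟩ : (dd - 1) ∣ (dd ^ ss - 1) := by
      have h := Nat.sub_dvd_pow_sub_pow dd 1 ss
      simpa using h
    have h1 : (Polynomial.X : Polynomial L) ^ (dd - 1) - 1
        ∣ Polynomial.X ^ (dd ^ ss - 1) - 1 := by
      have h2 := sub_dvd_pow_sub_pow ((Polynomial.X : Polynomial L) ^ (dd - 1)) 1 t
      rw [← pow_mul, one_pow, ← ht] at h2
      exact h2
    rw [hP, hR, hfac dd (by omega), hfac (dd ^ ss) (by omega)]
    exact mul_dvd_mul_left _ h1
  obtain ⟨Q, hQ⟩ := hdvd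
  have hQ0 : Q ≠ 0 := by rintro rfl; rw [mul_zero] at hQ; exact hR0 hQ
  have hQdegE : Q.natDegree = dd ^ ss - dd := by
    have hmul := Polynomial.natDegree_mul hP0 hQ0
    rw [← hQ, hRdeg, hPdeg] at hmul
    omega
  have hRroots : ∀ x : L, Polynomial.eval x R = 0 := by
    intro x
    have hx : x ^ Fintype.card L = x := FiniteField.pow_card x
    rw [hcard] at hx
    simp [hR, hx]
  have hunion : (Finset.univ : Finset L) ⊆ P.roots.toFinset ∪ Q.roots.toFinset := by
    intro x _
    have hx := hRroots x
    rw [hQ, Polynomial.eval_mul] at hx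
    rcases mul_eq_zero.mp hx with h | h
    · exact Finset.mem_union_left _
        (by rw [Multiset.mem_toFinset, Polynomial.mem_roots hP0]; exact h)
    · exact Finset.mem_union_right _
        (by rw [Multiset.mem_toFinset, Polynomial.mem_roots hQ0]; exact h)
  have hPcard : P.roots.toFinset.card ≤ dd :=
    le_trans (Multiset.toFinset_card_le _) (le_trans P.card_roots' (le_of_eq hPdeg))
  have hQcard : Q.roots.toFinset.card ≤ dd ^ ss - dd :=
    le_trans (Multiset.toFinset_card_le _) (le_trans Q.card_roots' (le_of_eq hQdegE))
  have hcardineq : dd ^ ss ≤ P.roots.toFinset.card + Q.roots.toFinset.card := by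
    calc dd ^ ss = Fintype.card L := hcard.symm
      _ = (Finset.univ : Finset L).card := Finset.card_univ.symm
      _ ≤ (P.roots.toFinset ∪ Q.roots.toFinset).card := Finset.card_le_card hunion
      _ ≤ _ := Finset.card_union_le _ _
  have hPfull : P.roots.toFinset.card = dd := by omega
  have hset : (L0 : Set L) = ↑(P.roots.toFinset) := by
    ext x
    rw [SetLike.mem_coe, Finset.mem_coe, Multiset.mem_toFinset, Polynomial.mem_roots hP0,
      hL0]
    constructor
    · intro h
      simp [hP, Polynomial.IsRoot, h, sub_eq_zero]
    · intro h
      simp only [hP, Polynomial.IsRoot, Polynomial.eval_sub, Polynomial.eval_pow,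
        Polynomial.eval_X, sub_eq_zero] at h
      exact h
  have hfin : Nat.card L0 = Nat.card ((L0 : Set L)) := rfl
  rw [hfin, Nat.card_coe_set_eq, hset, Set.ncard_coe_finset, hPfull]


/-- the sum-rank alternant code `C_Alt = (C^⊥)_{q_0,m}`, the
subextension subcode over `F_{q_0^m}` of the dual of a `(δ*−1)`-dimensional
linearized Reed–Solomon code `C ⊆ F_{q^m}^N` with `q = q_0^s`, has minimum
sum-rank distance over `F_{q_0}` at least `δ*` and has at least
`(q_0^m)^{N − s(δ*−1)}` codewords (i.e. dimension at least `N − s(δ*−1)` over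
`F_{q_0^m}`). -/
theorem sum_rank_alternant_bounds
    {K0 K L : Type*} [Field K0] [Fintype K0] [Field K] [Fintype K] [Field L] [Fintype L]
    [Algebra K0 K] [Algebra K L] [Algebra K0 L] [IsScalarTower K0 K L]
    {s : ℕ} (hs : 1 ≤ s) (hq : Fintype.card K = Fintype.card K0 ^ s)
    {m : ℕ} (β : Module.Basis (Fin m) K L) (γ : L) (hγ : orderOf γ = Fintype.card L - 1)
    (L0 : Subfield L) (hL0 : ∀ x : L, x ∈ L0 ↔ x ^ (Fintype.card K0) ^ m = x)
    {g : ℕ} (r : Fin g → ℕ) (hr : ∀ i, r i ≤ m) (hg : g ≤ Fintype.card K - 1)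
    (δstar : ℕ) (hδ : 1 ≤ δstar) (hδN : δstar ≤ ∑ i, r i)
    (CAlt : Set (∀ i : Fin g, Fin (r i) → L))
    (hCAlt : CAlt = {x | (∀ c ∈ linRS β γ (δstar - 1) r hr,
        ∑ i, ∑ j, x i j * c i j = 0) ∧ ∀ i j, x i j ∈ L0}) :
    (∀ c ∈ CAlt, ∀ d ∈ CAlt, c ≠ d → δstar ≤ srWeight K0 (c - d)) ∧
      (Fintype.card K0 ^ m) ^ ((∑ i, r i) - s * (δstar - 1)) ≤ Nat.card CAlt := by

  classical
  subst hCAlt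
  haveI : Module.Finite K L := Module.finite_iff_finite.mpr inferInstance
  haveI : Module.Finite K0 L := Module.finite_iff_finite.mpr inferInstance
  have hq02 : 2 ≤ Fintype.card K0 := Fintype.one_lt_card
  have hL2 : 2 ≤ Fintype.card L := Fintype.one_lt_card
  have hcardL : Fintype.card L = Fintype.card K ^ m := by
    have h1 : Fintype.card L = Fintype.card (Fin m → K) :=
      Fintype.card_congr β.equivFun.toEquiv
    rw [h1, Fintype.card_fun, Fintype.card_fin]
  have hm1 : 1 ≤ m := by
    by_contra hm
    have : m = 0 := by omega
    rw [this, pow_zero] at hcardL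
    omega
  -- the nonconjugacy property of the evaluation points
  have hconj := gamma_nonconj (K := K) hγ hcardL hg
  have hγ0 : γ ≠ 0 := by
    intro h
    rw [h] at hγ
    have h0 : orderOf (0 : L) = 0 := by
      rw [orderOf_eq_zero_iff']
      intro n hn h0
      rw [zero_pow (by omega)] at h0
      exact one_ne_zero h0.symm
    omega
  have ha0 : ∀ i : Fin g, γ ^ (i : ℕ) ≠ 0 := fun i => pow_ne_zero _ hγ0
  constructor
  · -- PART 1 : distance bound
    intro c hc d hd hne
    set x : ∀ i : Fin g, Fin (r i) → L := c - d with hxdef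
    have hx0 : x ≠ 0 := sub_ne_zero.mpr hne
    have hxperp : ∀ cc ∈ linRS β γ (δstar - 1) r hr,
        ∑ i, ∑ j, x i j * cc i j = 0 := by
      intro cc hcc
      have h1 := hc.1 cc hcc
      have h2 := hd.1 cc hcc
      have h3 : ∑ i, ∑ j, x i j * cc i j
          = (∑ i, ∑ j, c i j * cc i j) - ∑ i, ∑ j, d i j * cc i j := by
        rw [← Finset.sum_sub_distrib]
        apply Finset.sum_congr rfl
        intro i _
        rw [← Finset.sum_sub_distrib]
        apply Finset.sum_congr rfl
        intro t _
        simp [hxdef, sub_mul]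
      rw [h3, h1, h2, sub_zero]
    have hseq : ∀ s' : ℕ, s' < δstar - 1 →
        ∑ i, ∑ t, x i t * (β (Fin.castLE (hr i) t)) ^ (Fintype.card K) ^ s'
          * Nrm (Fintype.card K) s' (γ ^ (i : ℕ)) = 0 := by
      intro s' hs'
      have hmem : (fun (i : Fin g) (t : Fin (r i)) =>
          (β (Fin.castLE (hr i) t)) ^ (Fintype.card K) ^ s' *
            ∏ j ∈ Finset.range s', (γ ^ (i : ℕ)) ^ (Fintype.card K) ^ j)
          ∈ linRS β γ (δstar - 1) r hr := by
        refine ⟨Pi.single ⟨s', hs'⟩ 1, fun i t => ?_⟩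
        rw [Finset.sum_eq_single (⟨s', hs'⟩ : Fin (δstar - 1))]
        · simp
        · intro b _ hb
          rw [Pi.single_eq_of_ne hb, zero_mul]
        · intro habs
          exact absurd (Finset.mem_univ _) habs
      have h4 := hxperp _ hmem
      rw [← h4]
      apply Finset.sum_congr rfl
      intro i _
      apply Finset.sum_congr rfl
      intro t _
      exact mul_assoc _ _ _
    -- now the sum-rank argument
    by_contra hlt
    push_neg at hlt
    have hWle : srWeight K x ≤ srWeight K0 x := by
      apply Finset.sum_le_sum
      intro i _
      exact finrank_span_le_span_subfield K0 K L (x i)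
    set w : Fin g → ℕ :=
      fun i => Module.finrank K (Submodule.span K (Set.range (x i))) with hwdef
    have hwk : ∑ i, w i ≤ δstar - 1 := by
      have : srWeight K x = ∑ i, w i := rfl
      omega
    set Vi : Fin g → Submodule K L :=
      fun i => Submodule.span K (Set.range (x i)) with hVi
    have hmemx : ∀ i t, x i t ∈ Vi i :=
      fun i t => Submodule.subset_span (Set.mem_range_self t)
    set bb : ∀ i, Module.Basis (Fin (w i)) K (Vi i) :=
      fun i => Module.finBasis K (Vi i) with hbb
    set yv : ∀ i, Fin (w i) → L := fun i u => ((bb i u : Vi i) : L) with hyv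
    set A : ∀ i, Fin (r i) → Fin (w i) → K :=
      fun i t u => (bb i).repr ⟨x i t, hmemx i t⟩ u with hA
    set bv : ∀ i, Fin (w i) → L :=
      fun i u => ∑ t, A i t u • β (Fin.castLE (hr i) t) with hbv
    have hxit : ∀ i t, x i t = ∑ u, A i t u • yv i u := by
      intro i t
      have hrep := Module.Basis.sum_repr (bb i) ⟨x i t, hmemx i t⟩
      have hcoe := congrArg (Subtype.val) hrep
      calc x i t = ((⟨x i t, hmemx i t⟩ : Vi i) : L) := rfl
        _ = ∑ u, A i t u • yv i u := by
            rw [← hcoe, Submodule.coe_sum]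
            simp only [Submodule.coe_smul, hyv, hA]
    have hbv_pow : ∀ (s' : ℕ) i u, (bv i u) ^ (Fintype.card K) ^ s'
        = ∑ t, A i t u • (β (Fin.castLE (hr i) t)) ^ (Fintype.card K) ^ s' := by
      intro s' i u
      have h1 : (bv i u) ^ (Fintype.card K) ^ s' = frobPow K L s' (bv i u) :=
        (frobPow_apply K L s' _).symm
      rw [h1]
      simp only [hbv]
      rw [map_sum]
      apply Finset.sum_congr rfl
      intro t _
      rw [map_smul, frobPow_apply]
    have hbli : ∀ i, LinearIndependent K (bv i) := by
      intro i
      rw [Fintype.linearIndependent_iff]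
      intro μ hμ
      have hβli : LinearIndependent K (fun t : Fin (r i) => β (Fin.castLE (hr i) t)) :=
        β.linearIndependent.comp _ (Fin.castLE_injective _)
      have hswap : ∑ t, (∑ u, A i t u * μ u) • β (Fin.castLE (hr i) t)
          = ∑ u, μ u • bv i u := by
        calc ∑ t, (∑ u, A i t u * μ u) • β (Fin.castLE (hr i) t)
            = ∑ t, ∑ u, (A i t u * μ u) • β (Fin.castLE (hr i) t) := by
              apply Finset.sum_congr rfl
              intro t _
              rw [Finset.sum_smul]
          _ = ∑ u, ∑ t, (A i t u * μ u) • β (Fin.castLE (hr i) t) := Finset.sum_comm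
          _ = ∑ u, μ u • bv i u := by
              apply Finset.sum_congr rfl
              intro u _
              simp only [hbv]
              rw [Finset.smul_sum]
              apply Finset.sum_congr rfl
              intro t _
              rw [smul_smul, mul_comm (μ u) (A i t u)]
      rw [hμ] at hswap
      have hcoef : ∀ t, ∑ u, A i t u * μ u = 0 :=
        Fintype.linearIndependent_iff.mp hβli _ hswap
      intro u0
      set ℓ : (Vi i) →ₗ[K] K := ∑ u, μ u • (bb i).coord u with hℓ
      have hℓx : ∀ t, ℓ ⟨x i t, hmemx i t⟩ = 0 := by
        intro t
        rw [hℓ]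
        simp only [LinearMap.coe_sum, Finset.sum_apply, LinearMap.smul_apply,
          Module.Basis.coord_apply, smul_eq_mul]
        rw [← hcoef t]
        apply Finset.sum_congr rfl
        intro u _
        rw [mul_comm]
      have hℓ0 : ℓ (bb i u0) = 0 := by
        have htop : ⊤ ≤ LinearMap.ker ℓ := by
          rw [← Submodule.span_span_coe_preimage (R := K) (s := Set.range (x i))]
          rw [Submodule.span_le]
          rintro v hv
          rw [Set.mem_preimage] at hv
          obtain ⟨t, ht⟩ := hv
          rw [SetLike.mem_coe, LinearMap.mem_ker]
          have hveq : v = ⟨x i t, hmemx i t⟩ := Subtype.ext ht.symm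
          rw [hveq]
          exact hℓx t
        exact htop Submodule.mem_top
      rw [hℓ] at hℓ0
      simp only [LinearMap.coe_sum, Finset.sum_apply, LinearMap.smul_apply,
        Module.Basis.coord_apply, Module.Basis.repr_self, smul_eq_mul] at hℓ0
      rw [Finset.sum_eq_single u0] at hℓ0
      · simpa using hℓ0
      · intro b _ hb
        rw [Finsupp.single_eq_of_ne hb, mul_zero]
      · intro habs
        exact absurd (Finset.mem_univ _) habs
    have heq2 : ∀ s' : ℕ, s' < δstar - 1 →
        ∑ i, ∑ u, yv i u * (bv i u) ^ (Fintype.card K) ^ s'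
          * Nrm (Fintype.card K) s' (γ ^ (i : ℕ)) = 0 := by
      intro s' hs'
      rw [← hseq s' hs']
      apply Finset.sum_congr rfl
      intro i _
      calc ∑ u, yv i u * (bv i u) ^ (Fintype.card K) ^ s'
            * Nrm (Fintype.card K) s' (γ ^ (i : ℕ))
          = ∑ u, ∑ t, A i t u • (yv i u
              * (β (Fin.castLE (hr i) t)) ^ (Fintype.card K) ^ s'
              * Nrm (Fintype.card K) s' (γ ^ (i : ℕ))) := by
            apply Finset.sum_congr rfl
            intro u _
            rw [hbv_pow s' i u, Finset.mul_sum, Finset.sum_mul]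
            apply Finset.sum_congr rfl
            intro t _
            rw [mul_smul_comm, smul_mul_assoc]
        _ = ∑ t, ∑ u, A i t u • (yv i u
              * (β (Fin.castLE (hr i) t)) ^ (Fintype.card K) ^ s'
              * Nrm (Fintype.card K) s' (γ ^ (i : ℕ))) := Finset.sum_comm
        _ = ∑ t, x i t * (β (Fin.castLE (hr i) t)) ^ (Fintype.card K) ^ s'
              * Nrm (Fintype.card K) s' (γ ^ (i : ℕ)) := by
            apply Finset.sum_congr rfl
            intro t _
            rw [hxit i t, Finset.sum_mul, Finset.sum_mul]
            apply Finset.sum_congr rfl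
            intro u _
            rw [smul_mul_assoc, smul_mul_assoc]
    have hvan := vanish_lemma (fun i : Fin g => γ ^ (i : ℕ)) ha0 hconj
      (δstar - 1) w hwk bv hbli yv heq2
    have hw0 : ∀ i, w i = 0 := by
      intro i
      by_contra hne0
      have hpos : 0 < w i := Nat.pos_of_ne_zero hne0
      have h0 := hvan i ⟨0, hpos⟩
      have hnz := Module.Basis.ne_zero (bb i) ⟨0, hpos⟩
      apply hnz
      have hcoe0 : ((bb i ⟨0, hpos⟩ : Vi i) : L) = 0 := h0
      exact ZeroMemClass.coe_eq_zero.mp hcoe0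
    apply hx0
    funext i t
    have hbot : Vi i = ⊥ := by
      have hfr : Module.finrank K (Vi i) = 0 := hw0 i
      rwa [Submodule.finrank_eq_zero] at hfr
    have hxm := hmemx i t
    rw [hbot] at hxm
    simpa using hxm
  · -- PART 2 : cardinality bound
    set q0m := Fintype.card K0 ^ m with hq0m
    have hcardL2 : Fintype.card L = q0m ^ s := by
      rw [hcardL, hq, hq0m, ← pow_mul, ← pow_mul, mul_comm m s]
    have hq0m2 : 2 ≤ q0m := le_trans hq02 (Nat.le_self_pow (by omega) _)
    have hL0card : Nat.card L0 = q0m := card_subfield_eq q0m s hq0m2 hs hcardL2 L0 hL0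
    set Dm : Fin (δstar - 1) → ∀ i : Fin g, Fin (r i) → L := fun ss i t =>
      (β (Fin.castLE (hr i) t)) ^ (Fintype.card K) ^ (ss : ℕ) *
        ∏ j ∈ Finset.range (ss : ℕ), (γ ^ (i : ℕ)) ^ (Fintype.card K) ^ j with hDm
    have hPiff : ∀ x : (∀ i : Fin g, Fin (r i) → L),
        (∀ cc ∈ linRS β γ (δstar - 1) r hr, ∑ i, ∑ j, x i j * cc i j = 0)
          ↔ ∀ ss : Fin (δstar - 1), ∑ i, ∑ t, x i t * Dm ss i t = 0 := by
      intro x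
      constructor
      · intro hP ss
        apply hP
        refine ⟨Pi.single ss 1, fun i t => ?_⟩
        rw [Finset.sum_eq_single ss]
        · simp [hDm]
        · intro b _ hb
          rw [Pi.single_eq_of_ne hb, zero_mul]
        · intro habs
          exact absurd (Finset.mem_univ _) habs
      · rintro hD cc ⟨fc, hfc⟩
        calc ∑ i, ∑ t, x i t * cc i t
            = ∑ i, ∑ t, ∑ ss, fc ss * (x i t * Dm ss i t) := by
              apply Finset.sum_congr rfl
              intro i _
              apply Finset.sum_congr rfl
              intro t _
              rw [hfc i t, Finset.mul_sum]
              apply Finset.sum_congr rfl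
              intro ss _
              simp only [hDm]
              ring
          _ = ∑ ss, ∑ i, ∑ t, fc ss * (x i t * Dm ss i t) := by
              rw [Finset.sum_congr rfl (fun i _ => Finset.sum_comm)]
              exact Finset.sum_comm
          _ = ∑ ss, fc ss * (∑ i, ∑ t, x i t * Dm ss i t) := by
              apply Finset.sum_congr rfl
              intro ss _
              rw [Finset.mul_sum]
              apply Finset.sum_congr rfl
              intro i _
              rw [Finset.mul_sum]
          _ = 0 := by
              rw [Finset.sum_eq_zero]
              intro ss _
              rw [hD ss, mul_zero]
    set Φ : (∀ i : Fin g, Fin (r i) → L0) →+ (Fin (δstar - 1) → L) :=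
      AddMonoidHom.mk' (fun z => fun ss => ∑ i, ∑ t, (z i t : L) * Dm ss i t) (by
        intro z z'
        funext ss
        show ∑ i, ∑ t, ((z + z') i t : L) * Dm ss i t
            = (∑ i, ∑ t, (z i t : L) * Dm ss i t)
              + ∑ i, ∑ t, (z' i t : L) * Dm ss i t
        rw [← Finset.sum_add_distrib]
        apply Finset.sum_congr rfl
        intro i _
        rw [← Finset.sum_add_distrib]
        apply Finset.sum_congr rfl
        intro t _
        have hzz : (z + z') i t = z i t + z' i t := rfl
        rw [hzz]
        push_cast
        ring) with hΦ
    have hiff : ∀ z : (∀ i : Fin g, Fin (r i) → L0),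
        ((fun i t => (z i t : L)) ∈ {x : ∀ i : Fin g, Fin (r i) → L |
          (∀ c ∈ linRS β γ (δstar - 1) r hr, ∑ i, ∑ j, x i j * c i j = 0)
            ∧ ∀ i j, x i j ∈ L0}) ↔ Φ z = 0 := by
      intro z
      constructor
      · intro hz
        funext ss
        exact (hPiff _).mp hz.1 ss
      · intro hz
        refine ⟨(hPiff _).mpr (fun ss => congrFun hz ss), fun i t => (z i t).2⟩
    set e : {x : ∀ i : Fin g, Fin (r i) → L //
        x ∈ {x : ∀ i : Fin g, Fin (r i) → L |
          (∀ c ∈ linRS β γ (δstar - 1) r hr, ∑ i, ∑ j, x i j * c i j = 0)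
            ∧ ∀ i j, x i j ∈ L0}} ≃ ↥Φ.ker :=
      { toFun := fun xs => ⟨fun i t => ⟨xs.1 i t, xs.2.2 i t⟩, by
          rw [AddMonoidHom.mem_ker]
          exact (hiff _).mp xs.2⟩,
        invFun := fun zs => ⟨fun i t => (zs.1 i t : L),
          (hiff _).mpr (AddMonoidHom.mem_ker.mp zs.2)⟩,
        left_inv := fun xs => Subtype.ext rfl,
        right_inv := fun zs => Subtype.ext (funext fun i => funext fun t =>
          Subtype.ext rfl) } with he
    have hcardEq : Nat.card ({x : ∀ i : Fin g, Fin (r i) → L |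
        (∀ c ∈ linRS β γ (δstar - 1) r hr, ∑ i, ∑ j, x i j * c i j = 0)
          ∧ ∀ i j, x i j ∈ L0}) = Nat.card ↥Φ.ker := Nat.card_congr e
    have hGcard : Nat.card (∀ i : Fin g, Fin (r i) → L0) = q0m ^ (∑ i, r i) := by
      rw [Nat.card_pi]
      have hper : ∀ i : Fin g, Nat.card (Fin (r i) → L0) = q0m ^ (r i) := by
        intro i
        rw [Nat.card_fun, hL0card, Nat.card_eq_fintype_card, Fintype.card_fin]
      rw [Finset.prod_congr rfl (fun i _ => hper i), Finset.prod_pow_eq_pow_sum]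
    have hsplitcard :=
      AddSubgroup.card_eq_card_quotient_mul_card_addSubgroup Φ.ker
    have hquot : Nat.card ((∀ i : Fin g, Fin (r i) → L0) ⧸ Φ.ker)
        = Nat.card ↥Φ.range :=
      Nat.card_congr (QuotientAddGroup.quotientKerEquivRange Φ).toEquiv
    have hrangele : Nat.card ↥Φ.range ≤ q0m ^ (s * (δstar - 1)) := by
      calc Nat.card ↥Φ.range ≤ Nat.card (Fin (δstar - 1) → L) :=
            Nat.card_le_card_of_injective _ Subtype.val_injective
        _ = (q0m ^ s) ^ (δstar - 1) := by
            rw [Nat.card_fun, Nat.card_eq_fintype_card, Nat.card_eq_fintype_card,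
              Fintype.card_fin, hcardL2]
        _ = q0m ^ (s * (δstar - 1)) := by rw [← pow_mul]
    have hrangepos : 0 < Nat.card ↥Φ.range := Nat.card_pos
    rw [hcardEq]
    rcases le_or_gt (s * (δstar - 1)) (∑ i, r i) with hle | hgt
    · have hmul : q0m ^ ((∑ i, r i) - s * (δstar - 1)) * Nat.card ↥Φ.range
          ≤ Nat.card ↥Φ.ker * Nat.card ↥Φ.range := by
        calc q0m ^ ((∑ i, r i) - s * (δstar - 1)) * Nat.card ↥Φ.range
            ≤ q0m ^ ((∑ i, r i) - s * (δstar - 1)) * q0m ^ (s * (δstar - 1)) :=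
              Nat.mul_le_mul_left _ hrangele
          _ = q0m ^ (∑ i, r i) := by
              rw [← pow_add]
              congr 1
              exact Nat.sub_add_cancel hle
          _ = Nat.card (∀ i : Fin g, Fin (r i) → L0) := hGcard.symm
          _ = Nat.card ((∀ i : Fin g, Fin (r i) → L0) ⧸ Φ.ker)
                * Nat.card ↥Φ.ker := hsplitcard
          _ = Nat.card ↥Φ.range * Nat.card ↥Φ.ker := by rw [hquot]
          _ = Nat.card ↥Φ.ker * Nat.card ↥Φ.range := Nat.mul_comm _ _
      exact le_of_mul_le_mul_right hmul hrangepos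
    · have h0 : (∑ i, r i) - s * (δstar - 1) = 0 :=
        Nat.sub_eq_zero_of_le (le_of_lt hgt)
      rw [h0, pow_zero]
      have hker0 : (0 : ∀ i : Fin g, Fin (r i) → L0) ∈ Φ.ker := by
        rw [AddMonoidHom.mem_ker]
        exact map_zero Φ
      haveI : Nonempty ↥Φ.ker := ⟨⟨0, hker0⟩⟩
      exact Nat.card_pos
end
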